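/- arXiv:2106.10079 — 4 statements merged into one kernel-verified Lean document; each statement's English description precedes it below -/
import Mathlib

section
/- Let d ≥ 1, n ≥ 2, A ∈ GL_d(ℤ), and let μ be a probability measure on ℤ^d with finite entropy H(μ). Then for every integer t ≥ 0, ‖P^t(0,·) − U‖_TV ≥ 1 − (t·H(μ) + log 2)/log n. -/
noncomputable section

open scoped BigOperators

/-- Reduction of an integer vector modulo `n`. -/
def redMod (d n : ℕ) (v : Fin d → ℤ) : Fin d → ZMod n := fun i => (v i : ZMod n)

/-- The law `P^t(0,·)` of the affine random walk `X_t = A X_{t-1} + B_t mod n`, `X_0 = 0`,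
expressed using the integer inverse `B` of the matrix `A`:
`P^{t+1}(x) = ∑_b μ(b) P^t(A⁻¹(x - b))`. -/
def walkLawT (d n : ℕ) (B : Matrix (Fin d) (Fin d) ℤ)
    (μ : (Fin d → ℤ) → ℝ) : ℕ → (Fin d → ZMod n) → ℝ
  | 0, x => if x = 0 then 1 else 0
  | t + 1, x => ∑' b : Fin d → ℤ, μ b *
      walkLawT d n B μ t ((B.map (Int.cast : ℤ → ZMod n)).mulVec (x - redMod d n b))

/-- Total variation distance `(1/2) ∑_x |p x − q x|`. -/
def tvDist {X : Type*} (p q : X → ℝ) : ℝ := (1 / 2) * ∑' x, |p x - q x|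

/-- Entropy `H(p) = −∑_x p(x) log p(x)`. -/
def entropy {X : Type*} (p : X → ℝ) : ℝ := ∑' x, Real.negMulLog (p x)

/- ### Auxiliary lemmas -/

lemma aux_negMulLog_le_one {p : ℝ} (h0 : 0 ≤ p) (h1 : p ≤ 1) : Real.negMulLog p ≤ 1 := by
  rcases eq_or_lt_of_le h0 with h | h
  · simp [← h]
  · have hlog : Real.log p⁻¹ ≤ p⁻¹ - 1 := Real.log_le_sub_one_of_pos (by positivity)
    have : Real.negMulLog p = p * Real.log p⁻¹ := by
      rw [Real.log_inv, Real.negMulLog]; ring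
    rw [this]
    calc p * Real.log p⁻¹ ≤ p * (p⁻¹ - 1) := by
          exact mul_le_mul_of_nonneg_left hlog h.le
    _ = 1 - p := by field_simp
    _ ≤ 1 := by linarith

/-- Subadditivity of `negMulLog` on countable sums of nonnegative terms. -/
lemma aux_negMulLog_tsum_le {ι : Type*} (f : ι → ℝ) (hf : ∀ b, 0 ≤ f b) (hs : Summable f)
    (hns : Summable fun b => Real.negMulLog (f b)) :
    Real.negMulLog (∑' b, f b) ≤ ∑' b, Real.negMulLog (f b) := by
  have key : Real.negMulLog (∑' b, f b) = ∑' b, f b * (-Real.log (∑' b, f b)) := by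
    rw [tsum_mul_right, Real.negMulLog]
    ring
  rw [key]
  refine Summable.tsum_le_tsum (fun b => ?_) (hs.mul_right _) hns
  rcases eq_or_lt_of_le (hf b) with h0 | h0
  · simp [← h0, Real.negMulLog]
  · have hb : f b ≤ ∑' b, f b := Summable.le_tsum hs b (fun j _ => hf j)
    have : Real.log (f b) ≤ Real.log (∑' b, f b) := Real.log_le_log h0 hb
    rw [Real.negMulLog]
    nlinarith [h0]

lemma aux_logN_le (N : ℕ) (hN : 2 ≤ N) : Real.log N ≤ N * Real.log 2 := by
  have h2 : (2:ℝ) ≤ (N:ℝ) := by exact_mod_cast hN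
  have h1 : Real.log N = Real.log 2 + Real.log ((N:ℝ)/2) := by
    rw [← Real.log_mul (by norm_num) (by positivity)]
    congr 1; field_simp
  have h3 : Real.log ((N:ℝ)/2) ≤ (N:ℝ)/2 - 1 :=
    Real.log_le_sub_one_of_pos (by positivity)
  have h4 : (1/2 : ℝ) ≤ Real.log 2 := by
    have := Real.log_two_gt_d9; linarith
  nlinarith

/-- Entropy lower bound on total variation distance to uniform, on a finite set. -/
lemma aux_tv_entropy_bound {X : Type*} [Fintype X] (p : X → ℝ)
    (hp0 : ∀ x, 0 ≤ p x) (hp1 : ∑ x, p x = 1) (hN : 2 ≤ Fintype.card X) :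
    (1 - tvDist p (fun _ => (Fintype.card X : ℝ)⁻¹)) * Real.log (Fintype.card X)
      ≤ (∑ x, Real.negMulLog (p x)) + Real.log 2 := by
  set N := Fintype.card X with hNdef
  have hN0 : (0:ℝ) < N := by positivity
  have hN2 : (2:ℝ) ≤ (N:ℝ) := by exact_mod_cast hN
  set u : ℝ := (N:ℝ)⁻¹ with hu
  have hu0 : 0 < u := by positivity
  have hu1 : u ≤ 1/2 := by
    rw [hu]
    rw [inv_le_comm₀ (by positivity) (by norm_num)]
    norm_num; linarith
  have hlogN : Real.log N = -Real.log u := by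
    rw [hu, Real.log_inv]; ring
  have hlogN0 : 0 ≤ Real.log N := Real.log_nonneg (by linarith)
  have habs : ∀ x : X, |p x - u| = p x + u - 2 * min (p x) u := by
    intro x
    rcases le_total (p x) u with h | h
    · rw [min_eq_left h, abs_of_nonpos (by linarith)]; ring
    · rw [min_eq_right h, abs_of_nonneg (by linarith)]; ring
  have hsumu : ∑ _x : X, u = 1 := by
    rw [Finset.sum_const, Finset.card_univ, ← hNdef, nsmul_eq_mul, hu]
    field_simp
  have htv : 1 - tvDist p (fun _ => u) = ∑ x, min (p x) u := by
    rw [tvDist, tsum_fintype]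
    have : ∑ x, |p x - u| = ∑ x, (p x + u - 2 * min (p x) u) :=
      Finset.sum_congr rfl (fun x _ => habs x)
    rw [this]
    rw [Finset.sum_sub_distrib, Finset.sum_add_distrib, hp1, hsumu, ← Finset.mul_sum]
    ring
  rw [htv]
  have hple : ∀ x, p x ≤ 1 := by
    intro x
    calc p x ≤ ∑ y, p y := Finset.single_le_sum (fun y _ => hp0 y) (Finset.mem_univ x)
    _ = 1 := hp1
  have hpt : ∀ x : X, min (p x) u * Real.log N
      ≤ Real.negMulLog (p x) + u * p x * Real.log N := by
    intro x
    rcases le_total (p x) u with h | h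
    · rw [min_eq_left h]
      have h1 : p x * Real.log N ≤ Real.negMulLog (p x) := by
        rcases eq_or_lt_of_le (hp0 x) with h0 | h0
        · simp [← h0, Real.negMulLog]
        · have : Real.log (p x) ≤ Real.log u := Real.log_le_log h0 h
          rw [Real.negMulLog, hlogN]
          nlinarith
      nlinarith [mul_nonneg (mul_nonneg hu0.le (hp0 x)) hlogN0]
    · rw [min_eq_right h]
      have hconc : (1 - p x) * (u * Real.log N) ≤ Real.negMulLog (p x) := by
        have hu1' : u < 1 := by linarith
        set a : ℝ := (1 - p x) / (1 - u) with ha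
        set b : ℝ := (p x - u) / (1 - u) with hb
        have hden : 0 < 1 - u := by linarith
        have ha0 : 0 ≤ a := div_nonneg (by linarith [hple x]) hden.le
        have hb0 : 0 ≤ b := div_nonneg (by linarith) hden.le
        have hab : a + b = 1 := by
            rw [ha, hb, ← add_div, div_eq_one_iff_eq hden.ne']; ring
        have hcomb : a * u + b * 1 = p x := by
          rw [ha, hb, div_mul_eq_mul_div, mul_one, ← add_div, div_eq_iff hden.ne']; ring
        have := Real.concaveOn_negMulLog.2 (Set.mem_Ici.2 hu0.le)
          (Set.mem_Ici.2 (by norm_num : (0:ℝ) ≤ 1)) ha0 hb0 hab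
        rw [smul_eq_mul, smul_eq_mul, smul_eq_mul, smul_eq_mul, hcomb] at this
        have hml1 : Real.negMulLog 1 = 0 := by simp [Real.negMulLog]
        have hmlu : Real.negMulLog u = u * Real.log N := by
          rw [Real.negMulLog, hlogN]; ring
        rw [hml1, hmlu, mul_zero, add_zero] at this
        calc (1 - p x) * (u * Real.log N) ≤ a * (u * Real.log N) := by
              apply mul_le_mul_of_nonneg_right _ (by positivity)
              rw [ha, le_div_iff₀ hden]
              nlinarith [hp0 x, hple x]
        _ ≤ Real.negMulLog (p x) := this
      nlinarith
  calc (∑ x, min (p x) u) * Real.log N = ∑ x, min (p x) u * Real.log N := by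
        rw [Finset.sum_mul]
  _ ≤ ∑ x, (Real.negMulLog (p x) + u * p x * Real.log N) :=
      Finset.sum_le_sum (fun x _ => hpt x)
  _ = (∑ x, Real.negMulLog (p x)) + u * Real.log N := by
      rw [Finset.sum_add_distrib]
      congr 1
      have : ∑ x:X, u * p x * Real.log N = (∑ x, p x) * (u * Real.log N) := by
        rw [Finset.sum_mul]; exact Finset.sum_congr rfl (fun x _ => by ring)
      rw [this, hp1, one_mul]
  _ ≤ (∑ x, Real.negMulLog (p x)) + Real.log 2 := by
      have hlog2 : u * Real.log N ≤ Real.log 2 := by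
        have h := aux_logN_le N hN
        rw [hu, inv_mul_le_iff₀ hN0]
        linarith
      linarith

/-- **Theorem 1.2** (entropy lower bound on the mixing time): for any probability measure `μ`
on `ℤ^d` with finite entropy, the law of the affine random walk at time `t` satisfies
`‖P^t(0,·) − U‖_TV ≥ 1 − (t·H(μ) + log 2)/log n`. -/
theorem statement1
    (d n : ℕ) (hd : 1 ≤ d) (hn : 2 ≤ n)
    (A B : Matrix (Fin d) (Fin d) ℤ) (hAB : A * B = 1) (hBA : B * A = 1)
    (μ : (Fin d → ℤ) → ℝ) (hμ0 : ∀ v, 0 ≤ μ v) (hμ1 : HasSum μ 1)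
    (hent : Summable fun v => Real.negMulLog (μ v)) :
    ∀ t : ℕ,
      1 - ((t : ℝ) * entropy μ + Real.log 2) / Real.log n
        ≤ tvDist (walkLawT d n B μ t) (fun _ => ((n : ℝ) ^ d)⁻¹) := by
  haveI : NeZero n := ⟨by omega⟩
  set M : Matrix (Fin d) (Fin d) (ZMod n) := B.map (Int.cast : ℤ → ZMod n) with hM
  set φ : (Fin d → ℤ) → (Fin d → ZMod n) → (Fin d → ZMod n) :=
    fun b x => M.mulVec (x - redMod d n b) with hφ
  -- the update map is bijective
  have hMA : (A.map (Int.cast : ℤ → ZMod n)) * M = 1 := by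
    have h1 : (A * B).map (Int.cast : ℤ → ZMod n)
        = A.map Int.cast * B.map Int.cast :=
      Matrix.map_mul (f := Int.castRingHom (ZMod n))
    rw [hM, ← h1, hAB]
    exact Matrix.map_one _ (by simp) (by simp)
  have hbij : ∀ b : Fin d → ℤ, Function.Bijective (φ b) := by
    intro b
    have hinj : Function.Injective (φ b) := by
      intro x y h
      have h2 := congrArg (fun v => (A.map (Int.cast : ℤ → ZMod n)).mulVec v) h
      simp only [hφ, Matrix.mulVec_mulVec, hMA, Matrix.one_mulVec] at h2
      exact sub_left_inj.mp h2
    exact hinj.bijective_of_finite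
  have hμle : ∀ b, μ b ≤ 1 := fun b => le_hasSum hμ1 b (fun j _ => hμ0 j)
  have hrec : ∀ t x, walkLawT d n B μ (t+1) x
      = ∑' b, μ b * walkLawT d n B μ t (φ b x) := fun t x => rfl
  -- nonnegativity
  have hnn : ∀ t x, 0 ≤ walkLawT d n B μ t x := by
    intro t
    induction t with
    | zero => intro x; simp only [walkLawT]; split <;> norm_num
    | succ t ih =>
      intro x
      rw [hrec]
      exact tsum_nonneg fun b => mul_nonneg (hμ0 b) (ih _)
  -- total mass one
  have hsum : ∀ t, ∑ x : Fin d → ZMod n, walkLawT d n B μ t x = 1 := by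
    intro t
    induction t with
    | zero => simp [walkLawT]
    | succ t ih =>
      have hle1 : ∀ x, walkLawT d n B μ t x ≤ 1 := by
        intro x
        calc walkLawT d n B μ t x ≤ ∑ y, walkLawT d n B μ t y :=
              Finset.single_le_sum (fun y _ => hnn t y) (Finset.mem_univ x)
        _ = 1 := ih
      have hsummable : ∀ x : Fin d → ZMod n,
          Summable (fun b => μ b * walkLawT d n B μ t (φ b x)) := fun x =>
        Summable.of_nonneg_of_le (fun b => mul_nonneg (hμ0 b) (hnn _ _))
          (fun b => mul_le_of_le_one_right (hμ0 b) (hle1 _)) hμ1.summable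
      calc ∑ x : Fin d → ZMod n, walkLawT d n B μ (t+1) x
          = ∑ x : Fin d → ZMod n, ∑' b, μ b * walkLawT d n B μ t (φ b x) := by
            exact Finset.sum_congr rfl (fun x _ => hrec t x)
      _ = ∑' b, ∑ x : Fin d → ZMod n, μ b * walkLawT d n B μ t (φ b x) :=
            (Summable.tsum_finsetSum (fun x _ => hsummable x)).symm
      _ = ∑' b, μ b * ∑ x : Fin d → ZMod n, walkLawT d n B μ t (φ b x) :=
            tsum_congr fun b => by rw [Finset.mul_sum]
      _ = ∑' b, μ b := by
            refine tsum_congr fun b => ?_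
            rw [Function.Bijective.sum_comp (hbij b), ih, mul_one]
      _ = 1 := hμ1.tsum_eq
  have hle1 : ∀ t x, walkLawT d n B μ t x ≤ 1 := by
    intro t x
    calc walkLawT d n B μ t x ≤ ∑ y, walkLawT d n B μ t y :=
          Finset.single_le_sum (fun y _ => hnn t y) (Finset.mem_univ x)
    _ = 1 := hsum t
  -- entropy of μ is nonnegative
  have hmlμ : ∀ b, 0 ≤ Real.negMulLog (μ b) :=
    fun b => Real.negMulLog_nonneg (hμ0 b) (hμle b)
  have hHμ : entropy μ = ∑' b, Real.negMulLog (μ b) := rfl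
  have hHμ0 : 0 ≤ entropy μ := tsum_nonneg hmlμ
  -- entropy growth bound
  have hEnt : ∀ t, ∑ x : Fin d → ZMod n, Real.negMulLog (walkLawT d n B μ t x)
      ≤ t * entropy μ := by
    intro t
    induction t with
    | zero =>
      have : ∀ x : Fin d → ZMod n, Real.negMulLog (walkLawT d n B μ 0 x) = 0 := by
        intro x
        simp only [walkLawT]
        split <;> simp
      rw [Finset.sum_congr rfl (fun x _ => this x)]
      simp
    | succ t ih =>
      set p := walkLawT d n B μ t with hp
      set E := ∑ x : Fin d → ZMod n, Real.negMulLog (p x) with hE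
      have hS1 : ∀ x : Fin d → ZMod n, Summable (fun b => μ b * p (φ b x)) := fun x =>
        Summable.of_nonneg_of_le (fun b => mul_nonneg (hμ0 b) (hnn _ _))
          (fun b => mul_le_of_le_one_right (hμ0 b) (hle1 t _)) hμ1.summable
      have hS2a : ∀ x : Fin d → ZMod n,
          Summable (fun b => p (φ b x) * Real.negMulLog (μ b)) := fun x =>
        Summable.of_nonneg_of_le
          (fun b => mul_nonneg (hnn _ _) (hmlμ b))
          (fun b => mul_le_of_le_one_left (hmlμ b) (hle1 t _)) hent
      have hS2b : ∀ x : Fin d → ZMod n,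
          Summable (fun b => μ b * Real.negMulLog (p (φ b x))) := fun x =>
        Summable.of_nonneg_of_le
          (fun b => mul_nonneg (hμ0 b) (Real.negMulLog_nonneg (hnn _ _) (hle1 t _)))
          (fun b => mul_le_of_le_one_right (hμ0 b)
            (aux_negMulLog_le_one (hnn _ _) (hle1 t _))) hμ1.summable
      have hmul : ∀ (x : Fin d → ZMod n) (b : Fin d → ℤ),
          Real.negMulLog (μ b * p (φ b x))
            = p (φ b x) * Real.negMulLog (μ b) + μ b * Real.negMulLog (p (φ b x)) := by
        intro x b
        rw [Real.negMulLog_mul]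
      have hS2 : ∀ x : Fin d → ZMod n,
          Summable (fun b => Real.negMulLog (μ b * p (φ b x))) := by
        intro x
        have := (hS2a x).add (hS2b x)
        exact this.congr (fun b => (hmul x b).symm)
      calc ∑ x : Fin d → ZMod n, Real.negMulLog (walkLawT d n B μ (t+1) x)
          = ∑ x : Fin d → ZMod n, Real.negMulLog (∑' b, μ b * p (φ b x)) := by
            exact Finset.sum_congr rfl (fun x _ => by rw [hrec])
      _ ≤ ∑ x : Fin d → ZMod n, ∑' b, Real.negMulLog (μ b * p (φ b x)) :=
            Finset.sum_le_sum (fun x _ => aux_negMulLog_tsum_le _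
              (fun b => mul_nonneg (hμ0 b) (hnn _ _)) (hS1 x) (hS2 x))
      _ = ∑ x : Fin d → ZMod n,
            ∑' b, (p (φ b x) * Real.negMulLog (μ b) + μ b * Real.negMulLog (p (φ b x))) :=
            Finset.sum_congr rfl (fun x _ => tsum_congr (fun b => hmul x b))
      _ = ∑' b, ∑ x : Fin d → ZMod n,
            (p (φ b x) * Real.negMulLog (μ b) + μ b * Real.negMulLog (p (φ b x))) :=
            (Summable.tsum_finsetSum (fun x _ => (hS2a x).add (hS2b x))).symm
      _ = ∑' b, (Real.negMulLog (μ b) + μ b * E) := by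
            refine tsum_congr fun b => ?_
            rw [Finset.sum_add_distrib, ← Finset.sum_mul, ← Finset.mul_sum]
            rw [Function.Bijective.sum_comp (hbij b) p,
              Function.Bijective.sum_comp (hbij b) (fun y => Real.negMulLog (p y)),
              hsum t, one_mul]
      _ = entropy μ + E := by
            rw [Summable.tsum_add hent (hμ1.summable.mul_right E), tsum_mul_right, hμ1.tsum_eq,
              one_mul, hHμ]
      _ ≤ (↑(t+1)) * entropy μ := by
            push_cast
            linarith [ih]
  -- final assembly
  intro t
  have hcard : Fintype.card (Fin d → ZMod n) = n ^ d := by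
    simp [ZMod.card]
  have hN2 : 2 ≤ Fintype.card (Fin d → ZMod n) := by
    rw [hcard]
    calc 2 ≤ n := hn
    _ ≤ n ^ d := Nat.le_self_pow (by omega) n
  have hucast : ((Fintype.card (Fin d → ZMod n) : ℝ))⁻¹ = ((n:ℝ) ^ d)⁻¹ := by
    rw [hcard]; push_cast; ring
  have hA := aux_tv_entropy_bound (walkLawT d n B μ t) (hnn t) (hsum t) hN2
  rw [hucast] at hA
  have hlogcard : Real.log (Fintype.card (Fin d → ZMod n)) = d * Real.log n := by
    rw [hcard]; push_cast [Real.log_pow]; ring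
  rw [hlogcard] at hA
  set T := tvDist (walkLawT d n B μ t) (fun _ => ((n : ℝ) ^ d)⁻¹) with hT
  have hL : 0 < Real.log n := Real.log_pos (by exact_mod_cast hn)
  have hlog2 : 0 ≤ Real.log 2 := Real.log_nonneg (by norm_num)
  have hnum : 0 ≤ (t:ℝ) * entropy μ + Real.log 2 := by positivity
  have hkey : (1 - T) * Real.log n ≤ (t:ℝ) * entropy μ + Real.log 2 := by
    rcases le_or_gt (1 - T) 0 with h | h
    · calc (1 - T) * Real.log n ≤ 0 := mul_nonpos_of_nonpos_of_nonneg h hL.le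
      _ ≤ _ := hnum
    · have hd' : (1:ℝ) ≤ (d:ℝ) := by exact_mod_cast hd
      have h1 : (1 - T) * Real.log n ≤ (1 - T) * ((d:ℝ) * Real.log n) := by
        apply mul_le_mul_of_nonneg_left _ h.le
        nlinarith
      calc (1 - T) * Real.log n ≤ (1 - T) * ((d:ℝ) * Real.log n) := h1
      _ ≤ (∑ x : Fin d → ZMod n, Real.negMulLog (walkLawT d n B μ t x)) + Real.log 2 := hA
      _ ≤ (t:ℝ) * entropy μ + Real.log 2 := by linarith [hEnt t]
  have : 1 - T ≤ ((t:ℝ) * entropy μ + Real.log 2) / Real.log n :=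
    (le_div_iff₀ hL).mpr (by linarith)
  linarith

end
end

section
/- Let ε > 0 be such that the projection p : ℝ^d → 𝕋^d is injective on the ball B(0, ε·‖A‖). Let x, y ∈ 𝕋^d with d(x,y) < ε, and let K ≥ 0 be an integer such that d(A^l x, A^l y) < ε for every integer 0 ≤ l ≤ K. Let v be the unique representative of x − y in B(0, ε) and write v = v_s + v_u with v_s ∈ E_s, v_u ∈ E_u. Then ‖v_u‖ < λ^K · ε. In particular, if d(A^k x, A^k y) < ε for all integers k ≥ 0, then v ∈ E_s. -/
noncomputable section

open scoped BigOperators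

/-- The integer lattice `ℤ^d` inside `ℝ^d`. -/
def intLattice (d : ℕ) : AddSubgroup (Fin d → ℝ) :=
  AddSubgroup.pi Set.univ fun _ => AddSubgroup.zmultiples (1 : ℝ)

/-- The torus `𝕋^d = ℝ^d / ℤ^d`. -/
abbrev Torus (d : ℕ) := (Fin d → ℝ) ⧸ intLattice d

/-- The natural projection `p : ℝ^d → 𝕋^d`. -/
def Tproj (d : ℕ) : (Fin d → ℝ) →+ Torus d := QuotientAddGroup.mk' (intLattice d)

/-- The real matrix obtained from an integer matrix. -/
def matR {d : ℕ} (A : Matrix (Fin d) (Fin d) ℤ) : Matrix (Fin d) (Fin d) ℝ :=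
  A.map (Int.cast : ℤ → ℝ)

lemma intLattice_mapsTo {d : ℕ} (A : Matrix (Fin d) (Fin d) ℤ) :
    intLattice d ≤ (intLattice d).comap (matR A).mulVecLin.toAddMonoidHom := by
  intro x hx
  rw [AddSubgroup.mem_comap]
  rw [intLattice, AddSubgroup.mem_pi] at hx ⊢
  intro i _
  rw [AddSubgroup.mem_zmultiples_iff]
  choose k hk using fun j => AddSubgroup.mem_zmultiples_iff.mp (hx j (Set.mem_univ j))
  have hx' : ∀ j, (k j : ℝ) = x j := by
    intro j
    have := hk j
    rwa [zsmul_eq_mul, mul_one] at this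
  refine ⟨∑ j, A i j * k j, ?_⟩
  rw [zsmul_eq_mul, mul_one]
  have : (matR A).mulVecLin.toAddMonoidHom x i = ∑ j, (A i j : ℝ) * x j := by
    simp [matR, Matrix.mulVecLin_apply, Matrix.mulVec, dotProduct]
  rw [this]
  push_cast
  exact Finset.sum_congr rfl fun j _ => by rw [hx' j]

/-- The map on the torus induced by an integer matrix. -/
def tmap {d : ℕ} (A : Matrix (Fin d) (Fin d) ℤ) : Torus d →+ Torus d :=
  QuotientAddGroup.map (intLattice d) (intLattice d)
    (matR A).mulVecLin.toAddMonoidHom (intLattice_mapsTo A)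

/-- `iterZ A B k` is the `k`-th power (`k ∈ ℤ`) of the toral automorphism induced by `A`,
where `B` is the integer inverse of `A`. -/
def iterZ {d : ℕ} (A B : Matrix (Fin d) (Fin d) ℤ) (k : ℤ) (x : Torus d) : Torus d :=
  if 0 ≤ k then (⇑(tmap A))^[k.toNat] x else (⇑(tmap B))^[(-k).toNat] x

/-- The quotient "metric" on the torus induced by a norm `N` on `ℝ^d`. -/
def qdist {d : ℕ} (N : (Fin d → ℝ) → ℝ) (x y : Torus d) : ℝ :=
  sInf (N '' {v | Tproj d v = x - y})

/-- A norm on `ℝ^d` adapted to the hyperbolic matrix `A` (with integer inverse `B`),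
together with the stable/unstable splitting. -/
structure AdaptedNorm (d : ℕ) (A B : Matrix (Fin d) (Fin d) ℤ) where
  N : (Fin d → ℝ) → ℝ
  Es : Submodule ℝ (Fin d → ℝ)
  Eu : Submodule ℝ (Fin d → ℝ)
  compl : IsCompl Es Eu
  EsInvA : ∀ v ∈ Es, (matR A).mulVec v ∈ Es
  EuInvA : ∀ v ∈ Eu, (matR A).mulVec v ∈ Eu
  EsInvB : ∀ v ∈ Es, (matR B).mulVec v ∈ Es
  EuInvB : ∀ v ∈ Eu, (matR B).mulVec v ∈ Eu
  nonneg : ∀ v, 0 ≤ N v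
  eq_zero_iff : ∀ v, N v = 0 ↔ v = 0
  norm_smul : ∀ (c : ℝ) (v), N (c • v) = |c| * N v
  triangle : ∀ v w, N (v + w) ≤ N v + N w
  adapted : ∀ vs ∈ Es, ∀ vu ∈ Eu, N (vs + vu) = max (N vs) (N vu)
  lam : ℝ
  lam_nonneg : 0 ≤ lam
  lam_lt_one : lam < 1
  contract_s : ∀ v ∈ Es, N ((matR A).mulVec v) ≤ lam * N v
  contract_u : ∀ v ∈ Eu, N ((matR B).mulVec v) ≤ lam * N v
  cA : ℝ
  cB : ℝ
  boundA : ∀ v, N ((matR A).mulVec v) ≤ cA * N v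
  boundB : ∀ v, N ((matR B).mulVec v) ≤ cB * N v

/-- Hyperbolicity: no complex eigenvalue of modulus 1. -/
def IsHyperbolic {d : ℕ} (A : Matrix (Fin d) (Fin d) ℤ) : Prop :=
  ∀ z : ℂ, ((A.map (Int.cast : ℤ → ℂ)).charpoly).IsRoot z → ‖z‖ ≠ 1

/-- Local stable set `W^s_ε(x)` for the toral map induced by `A`
(taking `A` to be the inverse matrix gives the local unstable set). -/
def Wstable {d : ℕ} (A : Matrix (Fin d) (Fin d) ℤ) (N : (Fin d → ℝ) → ℝ) (ε : ℝ)
    (x : Torus d) : Set (Torus d) :=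
  {y | ∀ n : ℕ, qdist N ((⇑(tmap A))^[n] x) ((⇑(tmap A))^[n] y) ≤ ε}

/-- A rectangle: a set of diameter at most `ε` stable under the local product `[x,y]`. -/
def IsRectangle {d : ℕ} (A B : Matrix (Fin d) (Fin d) ℤ) (N : (Fin d → ℝ) → ℝ) (ε : ℝ)
    (R : Set (Torus d)) : Prop :=
  (∀ x ∈ R, ∀ y ∈ R, qdist N x y ≤ ε) ∧
  (∀ x ∈ R, ∀ y ∈ R, ∀ z, z ∈ Wstable A N ε x ∩ Wstable B N ε y → z ∈ R)

/-- A Markov partition for the toral automorphism induced by `A` (with inverse `B`). -/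
structure IsMarkovPartition {d m : ℕ} (A B : Matrix (Fin d) (Fin d) ℤ)
    (N : (Fin d → ℝ) → ℝ) (ε : ℝ) (R : Fin m → Set (Torus d)) : Prop where
  cover : (⋃ i, R i) = Set.univ
  rect : ∀ i, IsRectangle A B N ε (R i)
  proper : ∀ i, R i = closure (interior (R i))
  disj : ∀ i j, i ≠ j → interior (R i) ∩ interior (R j) = ∅
  markov_s : ∀ i j, ∀ x ∈ interior (R i), tmap A x ∈ interior (R j) →
      (⇑(tmap A)) '' (Wstable A N ε x ∩ R i) ⊆ Wstable A N ε (tmap A x) ∩ R j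
  markov_u : ∀ i j, ∀ x ∈ interior (R i), tmap A x ∈ interior (R j) →
      Wstable B N ε (tmap A x) ∩ R j ⊆ (⇑(tmap A)) '' (Wstable B N ε x ∩ R i)

/-- The adjacency relation of a Markov partition: `𝒜_{ij} = 1` iff
`int(R_i) ∩ A⁻¹(int(R_j)) ≠ ∅`. -/
def adjacent {d m : ℕ} (A : Matrix (Fin d) (Fin d) ℤ) (R : Fin m → Set (Torus d))
    (i j : Fin m) : Prop :=
  (interior (R i) ∩ (⇑(tmap A)) ⁻¹' interior (R j)).Nonempty

/-- The shift space `Ω` of bi-infinite admissible sequences. -/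
def shiftSpace {d m : ℕ} (A : Matrix (Fin d) (Fin d) ℤ) (R : Fin m → Set (Torus d)) :
    Set (ℤ → Fin m) :=
  {ω | ∀ k : ℤ, adjacent A R (ω k) (ω (k + 1))}

/-- The shift map `θ`. -/
def shiftMap {m : ℕ} (ω : ℤ → Fin m) : ℤ → Fin m := fun k => ω (k + 1)

/-! Since `p` is injective on `B(0, ε‖A‖)` and `A` maps `B(0, ε)` into that ball, the small
representative of `A^l x - A^l y` is forced, step by step, to be `A^l v`; so `A^l v` stays in
`B(0, ε)` for `l ≤ K`. The adapted norm bounds the unstable part of `A^K v` by `‖A^K v‖ < ε`,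
while `A` expands `E_u` by at least `λ⁻¹`, whence `‖v_u‖ ≤ λ^K ‖A^K v_u‖ < λ^K ε`. -/

open Matrix

lemma matR_mul {d : ℕ} (M N : Matrix (Fin d) (Fin d) ℤ) : matR (M * N) = matR M * matR N :=
  Matrix.map_mul (f := Int.castRingHom ℝ)

lemma matR_mulVec_matR_mulVec_of_mul_eq_one {d : ℕ} {A B : Matrix (Fin d) (Fin d) ℤ}
    (hBA : B * A = 1) (w : Fin d → ℝ) : matR B *ᵥ (matR A *ᵥ w) = w := by
  rw [mulVec_mulVec, ← matR_mul, hBA]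
  simp [matR]

lemma tmap_Tproj {d : ℕ} (A : Matrix (Fin d) (Fin d) ℤ) (w : Fin d → ℝ) :
    tmap A (Tproj d w) = Tproj d (matR A *ᵥ w) :=
  rfl

lemma iterate_tmap_Tproj {d : ℕ} (A : Matrix (Fin d) (Fin d) ℤ) (n : ℕ) (w : Fin d → ℝ) :
    (⇑(tmap A))^[n] (Tproj d w) = Tproj d (matR A ^ n *ᵥ w) := by
  induction n with
  | zero => simp
  | succ n ih => rw [Function.iterate_succ_apply', ih, tmap_Tproj, pow_succ', ← mulVec_mulVec]

lemma exists_Tproj_eq_of_qdist_lt {d : ℕ} {N : (Fin d → ℝ) → ℝ} {x y : Torus d} {r : ℝ}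
    (h : qdist N x y < r) : ∃ u, Tproj d u = x - y ∧ N u < r := by
  obtain ⟨w, hw⟩ := QuotientAddGroup.mk'_surjective (intLattice d) (x - y)
  obtain ⟨_, ⟨u, hu, rfl⟩, hlt⟩ := exists_lt_of_csInf_lt (Set.Nonempty.image N ⟨w, hw⟩) h
  exact ⟨u, hu, hlt⟩

lemma nonpos_of_forall_lt_pow_mul {a r c : ℝ} (hr₀ : 0 ≤ r) (hr₁ : r < 1)
    (h : ∀ n : ℕ, a < r ^ n * c) : a ≤ 0 := by
  have hlim := (tendsto_pow_atTop_nhds_zero_of_lt_one hr₀ hr₁).mul_const c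
  rw [zero_mul] at hlim
  exact ge_of_tendsto' hlim fun n => (h n).le

namespace AdaptedNorm

variable {d : ℕ} {A B : Matrix (Fin d) (Fin d) ℤ} (𝔑 : AdaptedNorm d A B)

lemma eq_zero_of_N_le_zero {v : Fin d → ℝ} (h : 𝔑.N v ≤ 0) : v = 0 :=
  (𝔑.eq_zero_iff v).mp (le_antisymm h (𝔑.nonneg v))

lemma pow_mulVec_mem_Es {v : Fin d → ℝ} (hv : v ∈ 𝔑.Es) (n : ℕ) : matR A ^ n *ᵥ v ∈ 𝔑.Es := by
  induction n with
  | zero => simpa using hv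
  | succ n ih => rw [pow_succ', ← mulVec_mulVec]; exact 𝔑.EsInvA _ ih

lemma pow_mulVec_mem_Eu {v : Fin d → ℝ} (hv : v ∈ 𝔑.Eu) (n : ℕ) : matR A ^ n *ᵥ v ∈ 𝔑.Eu := by
  induction n with
  | zero => simpa using hv
  | succ n ih => rw [pow_succ', ← mulVec_mulVec]; exact 𝔑.EuInvA _ ih

lemma N_le_lam_mul_N_mulVec (hBA : B * A = 1) {v : Fin d → ℝ} (hv : v ∈ 𝔑.Eu) :
    𝔑.N v ≤ 𝔑.lam * 𝔑.N (matR A *ᵥ v) := by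
  simpa only [matR_mulVec_matR_mulVec_of_mul_eq_one hBA] using 𝔑.contract_u _ (𝔑.EuInvA v hv)

lemma N_le_lam_pow_mul_N_pow_mulVec (hBA : B * A = 1) {v : Fin d → ℝ} (hv : v ∈ 𝔑.Eu)
    (n : ℕ) : 𝔑.N v ≤ 𝔑.lam ^ n * 𝔑.N (matR A ^ n *ᵥ v) := by
  induction n with
  | zero => simp
  | succ n ih =>
    calc 𝔑.N v ≤ 𝔑.lam ^ n * 𝔑.N (matR A ^ n *ᵥ v) := ih
      _ ≤ 𝔑.lam ^ n * (𝔑.lam * 𝔑.N (matR A *ᵥ (matR A ^ n *ᵥ v))) :=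
          mul_le_mul_of_nonneg_left (𝔑.N_le_lam_mul_N_mulVec hBA (𝔑.pow_mulVec_mem_Eu hv n))
            (pow_nonneg 𝔑.lam_nonneg n)
      _ = 𝔑.lam ^ (n + 1) * 𝔑.N (matR A ^ (n + 1) *ᵥ v) := by
          rw [pow_succ' (matR A), ← mulVec_mulVec]; ring

lemma lam_pos (hd : 1 ≤ d) (hBA : B * A = 1) : 0 < 𝔑.lam := by
  refine 𝔑.lam_nonneg.lt_of_ne fun hlam => ?_
  have hzero : ∀ w : Fin d → ℝ, w = 0 := by
    intro w
    have hw : w ∈ 𝔑.Es ⊔ 𝔑.Eu := 𝔑.compl.sup_eq_top ▸ Submodule.mem_top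
    obtain ⟨a, ha, b, hb, rfl⟩ := Submodule.mem_sup.mp hw
    have hAa : matR A *ᵥ a = 0 := 𝔑.eq_zero_of_N_le_zero (by simpa [← hlam] using 𝔑.contract_s a ha)
    have ha0 : a = 0 := by
      rw [← matR_mulVec_matR_mulVec_of_mul_eq_one hBA a, hAa, mulVec_zero]
    have hb0 : b = 0 :=
      𝔑.eq_zero_of_N_le_zero (by simpa [← hlam] using 𝔑.N_le_lam_mul_N_mulVec hBA hb)
    rw [ha0, hb0, add_zero]
  simpa using congrFun (hzero 1) ⟨0, hd⟩

lemma one_lt_cA (hBA : B * A = 1) {v : Fin d → ℝ} (hv : v ∈ 𝔑.Eu) (hv0 : v ≠ 0) :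
    1 < 𝔑.cA := by
  have hpos : 0 < 𝔑.N v := (𝔑.nonneg v).lt_of_ne fun h => hv0 ((𝔑.eq_zero_iff v).mp h.symm)
  have hchain : 𝔑.N v ≤ 𝔑.lam * 𝔑.cA * 𝔑.N v := by
    calc 𝔑.N v ≤ 𝔑.lam * 𝔑.N (matR A *ᵥ v) := 𝔑.N_le_lam_mul_N_mulVec hBA hv
      _ ≤ 𝔑.lam * (𝔑.cA * 𝔑.N v) := mul_le_mul_of_nonneg_left (𝔑.boundA v) 𝔑.lam_nonneg
      _ = 𝔑.lam * 𝔑.cA * 𝔑.N v := by ring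
  have hlamcA : 1 ≤ 𝔑.lam * 𝔑.cA := le_of_mul_le_mul_right (by simpa using hchain) hpos
  by_contra! hcA
  nlinarith [𝔑.lam_nonneg, 𝔑.lam_lt_one]

lemma N_pow_mulVec_lt (hcA : 1 ≤ 𝔑.cA) {ε : ℝ}
    (hinj : Set.InjOn (⇑(Tproj d)) {v | 𝔑.N v < ε * 𝔑.cA}) {x y : Torus d} {K : ℕ}
    (hK : ∀ l : ℕ, l ≤ K → qdist 𝔑.N ((⇑(tmap A))^[l] x) ((⇑(tmap A))^[l] y) < ε)
    {v : Fin d → ℝ} (hv : Tproj d v = x - y) (hvball : 𝔑.N v < ε) :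
    ∀ l : ℕ, l ≤ K → 𝔑.N (matR A ^ l *ᵥ v) < ε := by
  have hε : 0 ≤ ε := (𝔑.nonneg v).trans hvball.le
  intro l
  induction l with
  | zero => simpa using hvball
  | succ n ih =>
    intro hn
    obtain ⟨u, hu, hu_lt⟩ := exists_Tproj_eq_of_qdist_lt (hK (n + 1) hn)
    have hAv : 𝔑.N (matR A ^ (n + 1) *ᵥ v) < ε * 𝔑.cA := by
      rw [pow_succ', ← mulVec_mulVec]
      calc 𝔑.N (matR A *ᵥ (matR A ^ n *ᵥ v)) ≤ 𝔑.cA * 𝔑.N (matR A ^ n *ᵥ v) := 𝔑.boundA _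
        _ < 𝔑.cA * ε := mul_lt_mul_of_pos_left (ih (Nat.le_of_succ_le hn)) (by linarith)
        _ = ε * 𝔑.cA := mul_comm _ _
    have hu_small : 𝔑.N u < ε * 𝔑.cA := hu_lt.trans_le (le_mul_of_one_le_right hε hcA)
    have heq : matR A ^ (n + 1) *ᵥ v = u := by
      refine hinj hAv hu_small ?_
      rw [hu, ← iterate_tmap_Tproj, hv, iterate_map_sub]
    rwa [heq]

lemma N_unstable_lt (hd : 1 ≤ d) (hBA : B * A = 1) {ε : ℝ} (hε : 0 < ε)
    (hinj : Set.InjOn (⇑(Tproj d)) {v | 𝔑.N v < ε * 𝔑.cA}) {x y : Torus d} {K : ℕ}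
    (hK : ∀ l : ℕ, l ≤ K → qdist 𝔑.N ((⇑(tmap A))^[l] x) ((⇑(tmap A))^[l] y) < ε)
    {v : Fin d → ℝ} (hv : Tproj d v = x - y) (hvball : 𝔑.N v < ε)
    {vs vu : Fin d → ℝ} (hvs : vs ∈ 𝔑.Es) (hvu : vu ∈ 𝔑.Eu) (hsum : v = vs + vu) :
    𝔑.N vu < 𝔑.lam ^ K * ε := by
  have hlamK : 0 < 𝔑.lam ^ K := pow_pos (𝔑.lam_pos hd hBA) K
  rcases eq_or_ne vu 0 with rfl | hvu0
  · simpa [(𝔑.eq_zero_iff 0).mpr rfl] using mul_pos hlamK hε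
  have hsmall := 𝔑.N_pow_mulVec_lt (𝔑.one_lt_cA hBA hvu hvu0).le hinj hK hv hvball K le_rfl
  calc 𝔑.N vu ≤ 𝔑.lam ^ K * 𝔑.N (matR A ^ K *ᵥ vu) :=
        𝔑.N_le_lam_pow_mul_N_pow_mulVec hBA hvu K
    _ ≤ 𝔑.lam ^ K * 𝔑.N (matR A ^ K *ᵥ v) := by
        refine mul_le_mul_of_nonneg_left ?_ hlamK.le
        rw [hsum, mulVec_add, 𝔑.adapted _ (𝔑.pow_mulVec_mem_Es hvs K) _ (𝔑.pow_mulVec_mem_Eu hvu K)]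
        exact le_max_right _ _
    _ < 𝔑.lam ^ K * ε := mul_lt_mul_of_pos_left hsmall hlamK

end AdaptedNorm

theorem statement6_general
    (d : ℕ) (hd : 1 ≤ d)
    (A B : Matrix (Fin d) (Fin d) ℤ) (hBA : B * A = 1)
    (𝔑 : AdaptedNorm d A B)
    (ε : ℝ) (hε : 0 < ε)
    (hinj : Set.InjOn (⇑(Tproj d)) {v | 𝔑.N v < ε * 𝔑.cA})
    (x y : Torus d)
    (K : ℕ)
    (hK : ∀ l : ℕ, l ≤ K → qdist 𝔑.N ((⇑(tmap A))^[l] x) ((⇑(tmap A))^[l] y) < ε)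
    (v : Fin d → ℝ) (hv : Tproj d v = x - y) (hvball : 𝔑.N v < ε)
    (vs vu : Fin d → ℝ) (hvs : vs ∈ 𝔑.Es) (hvu : vu ∈ 𝔑.Eu) (hsum : v = vs + vu) :
    𝔑.N vu < 𝔑.lam ^ K * ε ∧
      ((∀ k : ℕ, qdist 𝔑.N ((⇑(tmap A))^[k] x) ((⇑(tmap A))^[k] y) < ε) → v ∈ 𝔑.Es) := by
  refine ⟨𝔑.N_unstable_lt hd hBA hε hinj hK hv hvball hvs hvu hsum, fun hall => ?_⟩
  have hvu0 : vu = 0 := 𝔑.eq_zero_of_N_le_zero <|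
    nonpos_of_forall_lt_pow_mul 𝔑.lam_nonneg 𝔑.lam_lt_one fun n =>
      𝔑.N_unstable_lt hd hBA hε hinj (fun l _ => hall l) hv hvball hvs hvu hsum
  rwa [hsum, hvu0, add_zero]

/-- **Proposition 2.6** (expansiveness, forward version): if `p` is injective on
`B(0, ε‖A‖)`, `x, y ∈ 𝕋^d`, and `d(A^l x, A^l y) < ε` for `0 ≤ l ≤ K`, then the unique
representative `v` of `x − y` in `B(0,ε)` has unstable component `‖v_u‖ < λ^K ε`.
In particular if `d(A^k x, A^k y) < ε` for all `k ≥ 0` then `v ∈ E_s`. -/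
theorem statement6
    (d : ℕ) (hd : 1 ≤ d)
    (A B : Matrix (Fin d) (Fin d) ℤ) (hAB : A * B = 1) (hBA : B * A = 1)
    (hhyp : IsHyperbolic A)
    (𝔑 : AdaptedNorm d A B)
    (ε : ℝ) (hε : 0 < ε)
    (hinj : Set.InjOn (⇑(Tproj d)) {v | 𝔑.N v < ε * 𝔑.cA})
    (x y : Torus d)
    (K : ℕ)
    (hK : ∀ l : ℕ, l ≤ K → qdist 𝔑.N ((⇑(tmap A))^[l] x) ((⇑(tmap A))^[l] y) < ε)
    (v : Fin d → ℝ) (hv : Tproj d v = x - y) (hvball : 𝔑.N v < ε)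
    (vs vu : Fin d → ℝ) (hvs : vs ∈ 𝔑.Es) (hvu : vu ∈ 𝔑.Eu) (hsum : v = vs + vu) :
    𝔑.N vu < 𝔑.lam ^ K * ε ∧
      ((∀ k : ℕ, qdist 𝔑.N ((⇑(tmap A))^[k] x) ((⇑(tmap A))^[k] y) < ε) → v ∈ 𝔑.Es) :=
  statement6_general d hd A B hBA 𝔑 ε hε hinj x y K hK v hv hvball vs vu hvs hvu hsum

end
end

section
/- Let ε > 0 be such that the projection p : ℝ^d → 𝕋^d is injective on the ball B(0, ε·max(‖A‖, ‖A^{−1}‖)). Let x, y ∈ 𝕋^d and let K ≥ 0 be an integer such that d(A^l x, A^l y) < ε for every integer l with −K ≤ l ≤ K. Then d(x,y) < ε·λ^K. In particular, if d(A^k x, A^k y) < ε for all k ∈ ℤ, then x = y. -/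
noncomputable section

open scoped BigOperators

section Expansiveness

variable {d : ℕ}

lemma tmap_proj (A : Matrix (Fin d) (Fin d) ℤ) (v : Fin d → ℝ) :
    tmap A (Tproj d v) = Tproj d ((matR A).mulVec v) :=
  QuotientAddGroup.map_mk' _ _ _ _ _

lemma tmap_iter_proj (A : Matrix (Fin d) (Fin d) ℤ) (n : ℕ) (v : Fin d → ℝ) :
    (⇑(tmap A))^[n] (Tproj d v) = Tproj d (((matR A).mulVec)^[n] v) := by
  induction n generalizing v with
  | zero => rfl
  | succ n ih =>
    rw [Function.iterate_succ_apply, Function.iterate_succ_apply, tmap_proj, ih]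

lemma exists_lift_of_qdist_lt {N : (Fin d → ℝ) → ℝ} {x y : Torus d} {c : ℝ}
    (h : qdist N x y < c) : ∃ v, Tproj d v = x - y ∧ N v < c := by
  by_contra hc
  push_neg at hc
  have hne : (N '' {v | Tproj d v = x - y}).Nonempty := by
    obtain ⟨v, hv⟩ := QuotientAddGroup.mk'_surjective (intLattice d) (x - y)
    exact ⟨N v, v, hv, rfl⟩
  have : c ≤ qdist N x y := le_csInf hne (by rintro a ⟨w, hw, rfl⟩; exact hc w hw)
  linarith [h]

lemma qdist_le_of_lift {N : (Fin d → ℝ) → ℝ} (hN : ∀ v, 0 ≤ N v) {x y : Torus d}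
    {v : Fin d → ℝ} (hv : Tproj d v = x - y) : qdist N x y ≤ N v :=
  csInf_le ⟨0, by rintro a ⟨w, _, rfl⟩; exact hN w⟩ ⟨v, hv, rfl⟩

lemma iterZ_natCast (A B : Matrix (Fin d) (Fin d) ℤ) (n : ℕ) (z : Torus d) :
    iterZ A B (n : ℤ) z = (⇑(tmap A))^[n] z := by
  simp [iterZ]

lemma iterZ_neg_natCast (A B : Matrix (Fin d) (Fin d) ℤ) (n : ℕ) (z : Torus d) :
    iterZ A B (-(n : ℤ)) z = (⇑(tmap B))^[n] z := by
  rcases Nat.eq_zero_or_pos n with h | h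
  · subst h; simp [iterZ]
  · rw [iterZ, if_neg (by omega), neg_neg, Int.toNat_natCast]

lemma matR_mul_eq_one {M P : Matrix (Fin d) (Fin d) ℤ} (h : M * P = 1) :
    matR M * matR P = 1 := by
  have h2 : ((M * P).map (Int.castRingHom ℝ : ℤ →+* ℝ))
      = (1 : Matrix (Fin d) (Fin d) ℤ).map (Int.castRingHom ℝ : ℤ →+* ℝ) := by rw [h]
  rw [Matrix.map_mul, Matrix.map_one _ (map_zero _) (map_one _)] at h2
  exact h2

lemma statement7_key
    (d : ℕ) (hd : 1 ≤ d)
    (A B : Matrix (Fin d) (Fin d) ℤ) (hAB : A * B = 1) (hBA : B * A = 1)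
    (𝔑 : AdaptedNorm d A B)
    (ε : ℝ) (hε : 0 < ε)
    (hinj : Set.InjOn (⇑(Tproj d)) {v | 𝔑.N v < ε * max 𝔑.cA 𝔑.cB})
    (x y : Torus d)
    (K : ℕ)
    (hK : ∀ l : ℤ, -(K : ℤ) ≤ l → l ≤ (K : ℤ) →
      qdist 𝔑.N (iterZ A B l x) (iterZ A B l y) < ε)
    (v : Fin d → ℝ) (hv : Tproj d v = x - y) (hvN : 𝔑.N v < ε) :
    𝔑.N v < ε * 𝔑.lam ^ K := by
  have hmAB : matR A * matR B = 1 := matR_mul_eq_one hAB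
  have hmBA : matR B * matR A = 1 := matR_mul_eq_one hBA
  set f := (matR A).mulVec with hfdef
  set g := (matR B).mulVec with hgdef
  have hfg : ∀ w, f (g w) = w := fun w => by
    rw [hfdef, hgdef, Matrix.mulVec_mulVec, hmAB, Matrix.one_mulVec]
  have hgf : ∀ w, g (f w) = w := fun w => by
    rw [hfdef, hgdef, Matrix.mulVec_mulVec, hmBA, Matrix.one_mulVec]
  have hfgn : ∀ n w, f^[n] (g^[n] w) = w := by
    intro n
    induction n with
    | zero => intro w; rfl
    | succ n ih =>
      intro w
      rw [Function.iterate_succ_apply (f := g), Function.iterate_succ_apply' (f := f),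
        ih, hfg]
  have hgfn : ∀ n w, g^[n] (f^[n] w) = w := by
    intro n
    induction n with
    | zero => intro w; rfl
    | succ n ih =>
      intro w
      rw [Function.iterate_succ_apply (f := f), Function.iterate_succ_apply' (f := g),
        ih, hgf]
  -- norm positivity helpers
  have hNpos : ∀ w : Fin d → ℝ, w ≠ 0 → 0 < 𝔑.N w := by
    intro w hw
    rcases lt_or_eq_of_le (𝔑.nonneg w) with h | h
    · exact h
    · exact absurd ((𝔑.eq_zero_iff w).mp h.symm) hw
  -- a nonzero vector
  have hone : (fun _ : Fin d => (1:ℝ)) ≠ 0 := by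
    intro h
    have := congrFun h ⟨0, hd⟩
    simp at this
  have hv0 : 0 < 𝔑.N (fun _ : Fin d => (1:ℝ)) := hNpos _ hone
  set v0 : Fin d → ℝ := fun _ => 1 with hv0def
  -- cA, cB nonneg
  have hcA0 : 0 ≤ 𝔑.cA := by
    have h1 := 𝔑.boundA v0
    have h2 := 𝔑.nonneg (f v0)
    nlinarith
  have hcB0 : 0 ≤ 𝔑.cB := by
    have h1 := 𝔑.boundB v0
    have h2 := 𝔑.nonneg (g v0)
    nlinarith
  -- 1 ≤ cB * cA
  have hcBA : 1 ≤ 𝔑.cB * 𝔑.cA := by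
    have h1 := 𝔑.boundA v0
    have h2 := 𝔑.boundB (f v0)
    rw [show (matR B).mulVec (f v0) = v0 from hgf v0] at h2
    nlinarith
  have hmax1 : 1 ≤ max 𝔑.cA 𝔑.cB := by
    by_contra h
    push_neg at h
    have h1 : 𝔑.cA < 1 := lt_of_le_of_lt (le_max_left _ _) h
    have h2 : 𝔑.cB < 1 := lt_of_le_of_lt (le_max_right _ _) h
    nlinarith
  have hmaxpos : 0 < max 𝔑.cA 𝔑.cB := lt_of_lt_of_le one_pos hmax1
  -- lam > 0
  have hlam_pos : 0 < 𝔑.lam := by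
    rcases lt_or_eq_of_le 𝔑.lam_nonneg with h | h
    · exact h
    exfalso
    have hmem : v0 ∈ 𝔑.Es ⊔ 𝔑.Eu := by
      rw [𝔑.compl.sup_eq_top]; trivial
    obtain ⟨vs, hvs, vu, hvu, hsum⟩ := Submodule.mem_sup.mp hmem
    have hne : vs ≠ 0 ∨ vu ≠ 0 := by
      by_contra hcon
      push_neg at hcon
      apply hone
      rw [← hsum, hcon.1, hcon.2, add_zero]
    rcases hne with hne | hne
    · have h1 := 𝔑.contract_s vs hvs
      have h2 := 𝔑.boundB ((matR A).mulVec vs)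
      rw [show (matR B).mulVec ((matR A).mulVec vs) = vs from hgf vs] at h2
      have h3 := hNpos vs hne
      have h4 := 𝔑.nonneg ((matR A).mulVec vs)
      rw [← h, zero_mul] at h1
      nlinarith [mul_le_mul_of_nonneg_left h1 hcB0]
    · have h1 := 𝔑.contract_u vu hvu
      have h2 := 𝔑.boundA ((matR B).mulVec vu)
      rw [show (matR A).mulVec ((matR B).mulVec vu) = vu from hfg vu] at h2
      have h3 := hNpos vu hne
      have h4 := 𝔑.nonneg ((matR B).mulVec vu)
      rw [← h, zero_mul] at h1
      nlinarith [mul_le_mul_of_nonneg_left h1 hcA0]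
  -- lifts project correctly
  have hproj_f : ∀ n : ℕ, Tproj d (f^[n] v) = iterZ A B (n : ℤ) x - iterZ A B (n : ℤ) y := by
    intro n
    rw [← tmap_iter_proj, hv, iterate_map_sub, iterZ_natCast, iterZ_natCast]
  have hproj_g : ∀ n : ℕ, Tproj d (g^[n] v)
      = iterZ A B (-(n : ℤ)) x - iterZ A B (-(n : ℤ)) y := by
    intro n
    rw [← tmap_iter_proj, hv, iterate_map_sub, iterZ_neg_natCast, iterZ_neg_natCast]
  -- forward smallness
  have forward : ∀ n : ℕ, n ≤ K → 𝔑.N (f^[n] v) < ε := by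
    intro n
    induction n with
    | zero => intro _; exact hvN
    | succ n ih =>
      intro hn
      have hn' : n ≤ K := Nat.le_of_succ_le hn
      have hprev : 𝔑.N (f^[n] v) < ε := ih hn'
      have hball : 𝔑.N (f^[n+1] v) < ε * max 𝔑.cA 𝔑.cB := by
        have h1 : 𝔑.N (f^[n+1] v) ≤ 𝔑.cA * 𝔑.N (f^[n] v) := by
          rw [Function.iterate_succ_apply']
          exact 𝔑.boundA _
        have h2 : 𝔑.cA * 𝔑.N (f^[n] v) ≤ max 𝔑.cA 𝔑.cB * 𝔑.N (f^[n] v) :=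
          mul_le_mul_of_nonneg_right (le_max_left _ _) (𝔑.nonneg _)
        have h3 : max 𝔑.cA 𝔑.cB * 𝔑.N (f^[n] v) < max 𝔑.cA 𝔑.cB * ε :=
          mul_lt_mul_of_pos_left hprev hmaxpos
        calc 𝔑.N (f^[n+1] v) ≤ 𝔑.cA * 𝔑.N (f^[n] v) := h1
          _ ≤ max 𝔑.cA 𝔑.cB * 𝔑.N (f^[n] v) := h2
          _ < max 𝔑.cA 𝔑.cB * ε := h3
          _ = ε * max 𝔑.cA 𝔑.cB := mul_comm _ _
      have hq : qdist 𝔑.N (iterZ A B ((n+1 : ℕ) : ℤ) x) (iterZ A B ((n+1 : ℕ) : ℤ) y) < ε :=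
        hK _ (by omega) (by exact_mod_cast Nat.cast_le.mpr hn)
      obtain ⟨w, hw, hwN⟩ := exists_lift_of_qdist_lt hq
      have heq : Tproj d (f^[n+1] v) = Tproj d w := by rw [hw, hproj_f (n+1)]
      have hwball : 𝔑.N w < ε * max 𝔑.cA 𝔑.cB :=
        lt_of_lt_of_le hwN (le_mul_of_one_le_right (le_of_lt hε) hmax1)
      have := hinj hball hwball heq
      rw [this]
      exact hwN
  -- backward smallness
  have backward : ∀ n : ℕ, n ≤ K → 𝔑.N (g^[n] v) < ε := by
    intro n
    induction n with
    | zero => intro _; exact hvN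
    | succ n ih =>
      intro hn
      have hn' : n ≤ K := Nat.le_of_succ_le hn
      have hprev : 𝔑.N (g^[n] v) < ε := ih hn'
      have hball : 𝔑.N (g^[n+1] v) < ε * max 𝔑.cA 𝔑.cB := by
        have h1 : 𝔑.N (g^[n+1] v) ≤ 𝔑.cB * 𝔑.N (g^[n] v) := by
          rw [Function.iterate_succ_apply']
          exact 𝔑.boundB _
        have h2 : 𝔑.cB * 𝔑.N (g^[n] v) ≤ max 𝔑.cA 𝔑.cB * 𝔑.N (g^[n] v) :=
          mul_le_mul_of_nonneg_right (le_max_right _ _) (𝔑.nonneg _)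
        have h3 : max 𝔑.cA 𝔑.cB * 𝔑.N (g^[n] v) < max 𝔑.cA 𝔑.cB * ε :=
          mul_lt_mul_of_pos_left hprev hmaxpos
        calc 𝔑.N (g^[n+1] v) ≤ 𝔑.cB * 𝔑.N (g^[n] v) := h1
          _ ≤ max 𝔑.cA 𝔑.cB * 𝔑.N (g^[n] v) := h2
          _ < max 𝔑.cA 𝔑.cB * ε := h3
          _ = ε * max 𝔑.cA 𝔑.cB := mul_comm _ _
      have hq : qdist 𝔑.N (iterZ A B (-((n+1 : ℕ) : ℤ)) x) (iterZ A B (-((n+1 : ℕ) : ℤ)) y)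
          < ε := hK _ (by omega) (by omega)
      obtain ⟨w, hw, hwN⟩ := exists_lift_of_qdist_lt hq
      have heq : Tproj d (g^[n+1] v) = Tproj d w := by rw [hw, hproj_g (n+1)]
      have hwball : 𝔑.N w < ε * max 𝔑.cA 𝔑.cB :=
        lt_of_lt_of_le hwN (le_mul_of_one_le_right (le_of_lt hε) hmax1)
      have := hinj hball hwball heq
      rw [this]
      exact hwN
  -- invariance and contraction
  have hEsf : ∀ n : ℕ, ∀ w ∈ 𝔑.Es, f^[n] w ∈ 𝔑.Es ∧ 𝔑.N (f^[n] w) ≤ 𝔑.lam ^ n * 𝔑.N w := by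
    intro n
    induction n with
    | zero => intro w hw; exact ⟨hw, by simp⟩
    | succ n ih =>
      intro w hw
      obtain ⟨hmem, hle⟩ := ih w hw
      constructor
      · rw [Function.iterate_succ_apply']
        exact 𝔑.EsInvA _ hmem
      · rw [Function.iterate_succ_apply']
        calc 𝔑.N (f (f^[n] w)) ≤ 𝔑.lam * 𝔑.N (f^[n] w) := 𝔑.contract_s _ hmem
          _ ≤ 𝔑.lam * (𝔑.lam ^ n * 𝔑.N w) := mul_le_mul_of_nonneg_left hle 𝔑.lam_nonneg
          _ = 𝔑.lam ^ (n+1) * 𝔑.N w := by ring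
  have hEug : ∀ n : ℕ, ∀ w ∈ 𝔑.Eu, g^[n] w ∈ 𝔑.Eu ∧ 𝔑.N (g^[n] w) ≤ 𝔑.lam ^ n * 𝔑.N w := by
    intro n
    induction n with
    | zero => intro w hw; exact ⟨hw, by simp⟩
    | succ n ih =>
      intro w hw
      obtain ⟨hmem, hle⟩ := ih w hw
      constructor
      · rw [Function.iterate_succ_apply']
        exact 𝔑.EuInvB _ hmem
      · rw [Function.iterate_succ_apply']
        calc 𝔑.N (g (g^[n] w)) ≤ 𝔑.lam * 𝔑.N (g^[n] w) := 𝔑.contract_u _ hmem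
          _ ≤ 𝔑.lam * (𝔑.lam ^ n * 𝔑.N w) := mul_le_mul_of_nonneg_left hle 𝔑.lam_nonneg
          _ = 𝔑.lam ^ (n+1) * 𝔑.N w := by ring
  have hEsg : ∀ n : ℕ, ∀ w ∈ 𝔑.Es, g^[n] w ∈ 𝔑.Es := by
    intro n
    induction n with
    | zero => intro w hw; exact hw
    | succ n ih =>
      intro w hw
      rw [Function.iterate_succ_apply']
      exact 𝔑.EsInvB _ (ih w hw)
  have hEuf : ∀ n : ℕ, ∀ w ∈ 𝔑.Eu, f^[n] w ∈ 𝔑.Eu := by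
    intro n
    induction n with
    | zero => intro w hw; exact hw
    | succ n ih =>
      intro w hw
      rw [Function.iterate_succ_apply']
      exact 𝔑.EuInvA _ (ih w hw)
  -- additivity of iterates
  have hfadd : ∀ n : ℕ, ∀ a b : Fin d → ℝ, f^[n] (a + b) = f^[n] a + f^[n] b := by
    intro n
    induction n with
    | zero => intro a b; rfl
    | succ n ih =>
      intro a b
      rw [Function.iterate_succ_apply, Function.iterate_succ_apply,
        Function.iterate_succ_apply (f := f), hfdef, Matrix.mulVec_add, ih]
  have hgadd : ∀ n : ℕ, ∀ a b : Fin d → ℝ, g^[n] (a + b) = g^[n] a + g^[n] b := by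
    intro n
    induction n with
    | zero => intro a b; rfl
    | succ n ih =>
      intro a b
      rw [Function.iterate_succ_apply, Function.iterate_succ_apply,
        Function.iterate_succ_apply (f := g), hgdef, Matrix.mulVec_add, ih]
  -- decompose v
  have hmemv : v ∈ 𝔑.Es ⊔ 𝔑.Eu := by
    rw [𝔑.compl.sup_eq_top]; trivial
  obtain ⟨vs, hvs, vu, hvu, hsum⟩ := Submodule.mem_sup.mp hmemv
  have hlamK : 0 < 𝔑.lam ^ K := pow_pos hlam_pos K
  -- bound on N vs
  have hNvs : 𝔑.N vs < 𝔑.lam ^ K * ε := by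
    have hw : g^[K] vs ∈ 𝔑.Es := hEsg K vs hvs
    have h1 : 𝔑.N (f^[K] (g^[K] vs)) ≤ 𝔑.lam ^ K * 𝔑.N (g^[K] vs) := (hEsf K _ hw).2
    rw [hfgn K vs] at h1
    have h2 : 𝔑.N (g^[K] vs) ≤ 𝔑.N (g^[K] v) := by
      rw [← hsum, hgadd, 𝔑.adapted _ (hEsg K vs hvs) _ (hEug K vu hvu).1]
      exact le_max_left _ _
    have h3 : 𝔑.N (g^[K] v) < ε := backward K le_rfl
    calc 𝔑.N vs ≤ 𝔑.lam ^ K * 𝔑.N (g^[K] vs) := h1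
      _ ≤ 𝔑.lam ^ K * 𝔑.N (g^[K] v) := mul_le_mul_of_nonneg_left h2 (le_of_lt hlamK)
      _ < 𝔑.lam ^ K * ε := mul_lt_mul_of_pos_left h3 hlamK
  have hNvu : 𝔑.N vu < 𝔑.lam ^ K * ε := by
    have hw : f^[K] vu ∈ 𝔑.Eu := hEuf K vu hvu
    have h1 : 𝔑.N (g^[K] (f^[K] vu)) ≤ 𝔑.lam ^ K * 𝔑.N (f^[K] vu) := (hEug K _ hw).2
    rw [hgfn K vu] at h1
    have h2 : 𝔑.N (f^[K] vu) ≤ 𝔑.N (f^[K] v) := by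
      rw [← hsum, hfadd, 𝔑.adapted _ (hEsf K vs hvs).1 _ (hEuf K vu hvu)]
      exact le_max_right _ _
    have h3 : 𝔑.N (f^[K] v) < ε := forward K le_rfl
    calc 𝔑.N vu ≤ 𝔑.lam ^ K * 𝔑.N (f^[K] vu) := h1
      _ ≤ 𝔑.lam ^ K * 𝔑.N (f^[K] v) := mul_le_mul_of_nonneg_left h2 (le_of_lt hlamK)
      _ < 𝔑.lam ^ K * ε := mul_lt_mul_of_pos_left h3 hlamK
  have : 𝔑.N v = max (𝔑.N vs) (𝔑.N vu) := by
    rw [← hsum]; exact 𝔑.adapted _ hvs _ hvu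
  rw [this, mul_comm ε]
  exact max_lt hNvs hNvu

end Expansiveness


/-- **Corollary 2.7** (expansiveness, two-sided version): if `p` is injective on
`B(0, ε·max(‖A‖,‖A⁻¹‖))` and `d(A^l x, A^l y) < ε` for all `−K ≤ l ≤ K`, then
`d(x,y) < ε λ^K`.  In particular if this holds for all `k ∈ ℤ` then `x = y`. -/
theorem statement7
    (d : ℕ) (hd : 1 ≤ d)
    (A B : Matrix (Fin d) (Fin d) ℤ) (hAB : A * B = 1) (hBA : B * A = 1)
    (hhyp : IsHyperbolic A)
    (𝔑 : AdaptedNorm d A B)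
    (ε : ℝ) (hε : 0 < ε)
    (hinj : Set.InjOn (⇑(Tproj d)) {v | 𝔑.N v < ε * max 𝔑.cA 𝔑.cB})
    (x y : Torus d)
    (K : ℕ)
    (hK : ∀ l : ℤ, -(K : ℤ) ≤ l → l ≤ (K : ℤ) →
      qdist 𝔑.N (iterZ A B l x) (iterZ A B l y) < ε) :
    qdist 𝔑.N x y < ε * 𝔑.lam ^ K ∧
      ((∀ k : ℤ, qdist 𝔑.N (iterZ A B k x) (iterZ A B k y) < ε) → x = y) := by
  have h0 : qdist 𝔑.N x y < ε := by
    have h := hK 0 (by omega) (by omega)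
    simpa [iterZ] using h
  obtain ⟨v, hv, hvN⟩ := exists_lift_of_qdist_lt h0
  have hkey : 𝔑.N v < ε * 𝔑.lam ^ K :=
    statement7_key d hd A B hAB hBA 𝔑 ε hε hinj x y K hK v hv hvN
  constructor
  · exact lt_of_le_of_lt (qdist_le_of_lift 𝔑.nonneg hv) hkey
  · intro hall
    have hKall : ∀ K' : ℕ, 𝔑.N v < ε * 𝔑.lam ^ K' := fun K' =>
      statement7_key d hd A B hAB hBA 𝔑 ε hε hinj x y K' (fun l _ _ => hall l) v hv hvN
    have htend : Filter.Tendsto (fun n : ℕ => ε * 𝔑.lam ^ n) Filter.atTop (nhds 0) := by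
      simpa using
        (tendsto_pow_atTop_nhds_zero_of_lt_one 𝔑.lam_nonneg 𝔑.lam_lt_one).const_mul ε
    have hle : 𝔑.N v ≤ 0 := ge_of_tendsto' htend fun n => le_of_lt (hKall n)
    have hz : 𝔑.N v = 0 := le_antisymm hle (𝔑.nonneg v)
    have hv0 : v = 0 := (𝔑.eq_zero_iff v).mp hz
    have hxy : x - y = 0 := by rw [← hv, hv0, map_zero]
    exact sub_eq_zero.mp hxy


end
end

section
/- For all sufficiently small ε > 0 the following holds: if x, y ∈ 𝕋^d satisfy d(x,y) ≤ ε, then the intersection W^s_ε(x) ∩ W^u_ε(y) contains exactly one point, denoted [x,y]; moreover the map (x,y) ↦ [x,y] is continuous on the set {(x,y) ∈ 𝕋^d × 𝕋^d : d(x,y) ≤ ε}. -/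
noncomputable section

open scoped BigOperators

namespace StatementAux

open Topology

variable {d : ℕ} {A B : Matrix (Fin d) (Fin d) ℤ}

lemma tproj_surjective : Function.Surjective (Tproj d) :=
  QuotientAddGroup.mk'_surjective _

section NormLemmas
variable (𝔑 : AdaptedNorm d A B)

lemma N_zero : 𝔑.N 0 = 0 := (𝔑.eq_zero_iff 0).mpr rfl

lemma N_neg (v : Fin d → ℝ) : 𝔑.N (-v) = 𝔑.N v := by
  have := 𝔑.norm_smul (-1) v
  simpa using this

lemma N_sum {ι : Type*} (s : Finset ι) (f : ι → Fin d → ℝ) :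
    𝔑.N (∑ i ∈ s, f i) ≤ ∑ i ∈ s, 𝔑.N (f i) := by
  classical
  induction s using Finset.cons_induction with
  | empty => simp [N_zero]
  | cons a s ha ih =>
    rw [Finset.sum_cons, Finset.sum_cons]
    exact le_trans (𝔑.triangle _ _) (by linarith)

lemma N_upper : ∃ C : ℝ, 0 < C ∧ ∀ v, 𝔑.N v ≤ C * ‖v‖ := by
  classical
  set C := (∑ i, 𝔑.N (Pi.single (M := fun _ : Fin d => ℝ) i 1)) + 1 with hC
  have hsum : 0 ≤ ∑ i, 𝔑.N (Pi.single (M := fun _ : Fin d => ℝ) i 1) := Finset.sum_nonneg fun i _ => 𝔑.nonneg _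
  refine ⟨C, by linarith, fun v => ?_⟩
  have hv : v = ∑ i, (v i) • (Pi.single (M := fun _ : Fin d => ℝ) i 1) := by
    ext j
    simp [Pi.single_apply, Finset.sum_apply]
  calc 𝔑.N v = 𝔑.N (∑ i, (v i) • Pi.single (M := fun _ : Fin d => ℝ) i 1) := by rw [← hv]
    _ ≤ ∑ i, 𝔑.N ((v i) • Pi.single (M := fun _ : Fin d => ℝ) i 1) := N_sum 𝔑 _ _
    _ = ∑ i, |v i| * 𝔑.N (Pi.single (M := fun _ : Fin d => ℝ) i 1) := by simp [𝔑.norm_smul]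
    _ ≤ ∑ i, ‖v‖ * 𝔑.N (Pi.single (M := fun _ : Fin d => ℝ) i 1) := Finset.sum_le_sum fun i _ =>
        mul_le_mul_of_nonneg_right (by simpa [Real.norm_eq_abs] using norm_le_pi_norm v i) (𝔑.nonneg _)
    _ = (∑ i, 𝔑.N (Pi.single (M := fun _ : Fin d => ℝ) i 1)) * ‖v‖ := by rw [Finset.sum_mul]; exact Finset.sum_congr rfl fun i _ => mul_comm _ _
    _ ≤ C * ‖v‖ := mul_le_mul_of_nonneg_right (by linarith) (norm_nonneg v)

lemma N_lipschitz (a b : Fin d → ℝ) : |𝔑.N a - 𝔑.N b| ≤ 𝔑.N (a - b) := by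
  have h1 : 𝔑.N a ≤ 𝔑.N b + 𝔑.N (a - b) := by
    have := 𝔑.triangle b (a - b); simpa using this
  have h2 : 𝔑.N b ≤ 𝔑.N a + 𝔑.N (a - b) := by
    have h : 𝔑.N b ≤ 𝔑.N a + 𝔑.N (b - a) := by simpa using 𝔑.triangle a (b - a)
    have hn : 𝔑.N (b - a) = 𝔑.N (a - b) := by rw [← N_neg 𝔑 (a - b), neg_sub]
    linarith
  rw [abs_sub_le_iff]; constructor <;> linarith

lemma N_continuous : Continuous 𝔑.N := by
  obtain ⟨C, hC, hCle⟩ := N_upper 𝔑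
  refine (LipschitzWith.of_dist_le_mul (K := ⟨C, hC.le⟩) fun a b => ?_).continuous
  calc dist (𝔑.N a) (𝔑.N b) = |𝔑.N a - 𝔑.N b| := Real.dist_eq _ _
    _ ≤ 𝔑.N (a - b) := N_lipschitz 𝔑 a b
    _ ≤ C * ‖a - b‖ := hCle _
    _ = C * dist a b := by rw [dist_eq_norm]

lemma N_lower (hd : 1 ≤ d) : ∃ c : ℝ, 0 < c ∧ ∀ v, c * ‖v‖ ≤ 𝔑.N v := by
  haveI : Nonempty (Fin d) := ⟨⟨0, hd⟩⟩
  have hsph : (Metric.sphere (0 : Fin d → ℝ) 1).Nonempty :=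
    NormedSpace.sphere_nonempty.mpr zero_le_one
  obtain ⟨w, hw, hmin⟩ := (isCompact_sphere (0 : Fin d → ℝ) 1).exists_isMinOn hsph
    (N_continuous 𝔑).continuousOn
  have hw1 : ‖w‖ = 1 := by simpa using hw
  have hwne : w ≠ 0 := by intro h; rw [h] at hw1; simp at hw1
  have hc : 0 < 𝔑.N w := lt_of_le_of_ne (𝔑.nonneg w) fun h => hwne ((𝔑.eq_zero_iff w).mp h.symm)
  refine ⟨𝔑.N w, hc, fun v => ?_⟩
  rcases eq_or_ne v 0 with rfl | hv
  · simp [N_zero]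
  · have hnv : (0:ℝ) < ‖v‖ := norm_pos_iff.mpr hv
    have hmem : ‖v‖⁻¹ • v ∈ Metric.sphere (0 : Fin d → ℝ) 1 := by
      simp [norm_smul, abs_of_pos (inv_pos.mpr hnv), inv_mul_cancel₀ hnv.ne']
    have : 𝔑.N w ≤ 𝔑.N (‖v‖⁻¹ • v) := hmin hmem
    have heq : 𝔑.N (‖v‖⁻¹ • v) = ‖v‖⁻¹ * 𝔑.N v := by
      rw [𝔑.norm_smul]; rw [abs_of_pos (inv_pos.mpr hnv)]
    rw [heq] at this
    calc 𝔑.N w * ‖v‖ ≤ (‖v‖⁻¹ * 𝔑.N v) * ‖v‖ := by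
          exact mul_le_mul_of_nonneg_right this hnv.le
      _ = 𝔑.N v := by field_simp

end NormLemmas

section Qdist
variable (𝔑 : AdaptedNorm d A B)

lemma qdist_le {x y : Torus d} {v : Fin d → ℝ} (hv : Tproj d v = x - y) :
    qdist 𝔑.N x y ≤ 𝔑.N v :=
  csInf_le ⟨0, by rintro r ⟨u, _, rfl⟩; exact 𝔑.nonneg u⟩ ⟨v, hv, rfl⟩

lemma qdist_nonneg (x y : Torus d) : 0 ≤ qdist 𝔑.N x y := by
  obtain ⟨v₀, hv₀⟩ := tproj_surjective (x - y)
  exact le_csInf ⟨_, ⟨v₀, hv₀, rfl⟩⟩ (by rintro r ⟨u, _, rfl⟩; exact 𝔑.nonneg u)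

lemma intLattice_isClosed : IsClosed ((intLattice d : AddSubgroup (Fin d → ℝ)) : Set (Fin d → ℝ)) := by
  have h : ((intLattice d : AddSubgroup (Fin d → ℝ)) : Set (Fin d → ℝ)) =
      Set.pi Set.univ (fun _ => Set.range ((↑) : ℤ → ℝ)) := by
    ext v
    simp only [SetLike.mem_coe, intLattice, AddSubgroup.mem_pi, Set.mem_pi, Set.mem_univ,
      true_implies, AddSubgroup.mem_zmultiples_iff, Set.mem_range, zsmul_eq_mul, mul_one]
  rw [h]
  exact isClosed_set_pi fun i _ => Int.isClosedEmbedding_coe_real.isClosed_range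

lemma liftSet_closed (w : Torus d) : IsClosed {v : Fin d → ℝ | Tproj d v = w} := by
  obtain ⟨v₀, rfl⟩ := tproj_surjective w
  have h : {v : Fin d → ℝ | Tproj d v = Tproj d v₀} =
      (fun v => v - v₀) ⁻¹' ((intLattice d : AddSubgroup (Fin d → ℝ)) : Set (Fin d → ℝ)) := by
    ext v
    simp only [Set.mem_setOf_eq, Set.mem_preimage, SetLike.mem_coe]
    constructor
    · intro hv
      have : Tproj d (v - v₀) = 0 := by rw [map_sub, hv, sub_self]
      exact (QuotientAddGroup.eq_zero_iff _).mp this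
    · intro hv
      have : Tproj d (v - v₀) = 0 := (QuotientAddGroup.eq_zero_iff _).mpr hv
      rw [map_sub, sub_eq_zero] at this
      exact this
  rw [h]
  exact (intLattice_isClosed).preimage (continuous_id.sub continuous_const)

lemma exists_min_lift (hd : 1 ≤ d) (x y : Torus d) :
    ∃ v, Tproj d v = x - y ∧ 𝔑.N v = qdist 𝔑.N x y ∧
      ∀ u, Tproj d u = x - y → 𝔑.N v ≤ 𝔑.N u := by
  obtain ⟨c, hc, hlow⟩ := N_lower 𝔑 hd
  obtain ⟨v₀, hv₀⟩ := tproj_surjective (x - y)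
  set S := {v : Fin d → ℝ | Tproj d v = x - y} with hS
  set K := S ∩ {v | 𝔑.N v ≤ 𝔑.N v₀} with hKdef
  have hKc : IsClosed K := (liftSet_closed _).inter (isClosed_le (N_continuous 𝔑) continuous_const)
  have hKb : Bornology.IsBounded K := by
    apply (Metric.isBounded_closedBall (x := (0 : Fin d → ℝ)) (r := 𝔑.N v₀ / c)).subset
    rintro v ⟨-, hv⟩
    simp only [Metric.mem_closedBall, dist_zero_right]
    rw [le_div_iff₀ hc]
    calc ‖v‖ * c = c * ‖v‖ := mul_comm _ _
      _ ≤ 𝔑.N v := hlow v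
      _ ≤ 𝔑.N v₀ := hv
  have hK : IsCompact K := Metric.isCompact_of_isClosed_isBounded hKc hKb
  have hv₀K : v₀ ∈ K := ⟨hv₀, by simp only [Set.mem_setOf_eq]; exact le_refl _⟩
  obtain ⟨v, hvK, hvmin⟩ := hK.exists_isMinOn ⟨v₀, hv₀K⟩ (N_continuous 𝔑).continuousOn
  have hmin : ∀ u ∈ S, 𝔑.N v ≤ 𝔑.N u := by
    intro u hu
    by_cases h : 𝔑.N u ≤ 𝔑.N v₀
    · exact hvmin ⟨hu, h⟩
    · exact le_trans (hvmin hv₀K) (le_of_not_ge h)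
  refine ⟨v, hvK.1, ?_, fun u hu => hmin u hu⟩
  refine le_antisymm ?_ (qdist_le 𝔑 hvK.1)
  exact le_csInf ⟨_, ⟨v₀, hv₀, rfl⟩⟩ (by rintro r ⟨u, hu, rfl⟩; exact hmin u hu)

lemma qdist_symm (x y : Torus d) : qdist 𝔑.N x y = qdist 𝔑.N y x := by
  unfold qdist
  congr 1
  ext r
  constructor
  · rintro ⟨v, hv, rfl⟩
    refine ⟨-v, ?_, N_neg 𝔑 v⟩
    simp only [Set.mem_setOf_eq] at hv ⊢
    rw [map_neg, hv, neg_sub]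
  · rintro ⟨v, hv, rfl⟩
    refine ⟨-v, ?_, N_neg 𝔑 v⟩
    simp only [Set.mem_setOf_eq] at hv ⊢
    rw [map_neg, hv, neg_sub]

lemma qdist_triangle (hd : 1 ≤ d) (x y z : Torus d) :
    qdist 𝔑.N x z ≤ qdist 𝔑.N x y + qdist 𝔑.N y z := by
  obtain ⟨v₁, h₁, e₁, -⟩ := exists_min_lift 𝔑 hd x y
  obtain ⟨v₂, h₂, e₂, -⟩ := exists_min_lift 𝔑 hd y z
  have : Tproj d (v₁ + v₂) = x - z := by rw [map_add, h₁, h₂]; abel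
  calc qdist 𝔑.N x z ≤ 𝔑.N (v₁ + v₂) := qdist_le 𝔑 this
    _ ≤ 𝔑.N v₁ + 𝔑.N v₂ := 𝔑.triangle _ _
    _ = _ := by rw [e₁, e₂]

lemma qdist_sub_zero (x y : Torus d) : qdist 𝔑.N x y = qdist 𝔑.N (x - y) 0 := by
  unfold qdist
  rw [sub_zero]

lemma lattice_min (hd : 1 ≤ d) :
    ∃ ρ : ℝ, 0 < ρ ∧ ∀ ℓ ∈ intLattice d, ℓ ≠ 0 → ρ ≤ 𝔑.N ℓ := by
  obtain ⟨c, hc, hlow⟩ := N_lower 𝔑 hd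
  refine ⟨c, hc, fun ℓ hℓ hne => ?_⟩
  obtain ⟨i, hi⟩ := Function.ne_iff.mp hne
  rw [intLattice, AddSubgroup.mem_pi] at hℓ
  obtain ⟨k, hk⟩ := AddSubgroup.mem_zmultiples_iff.mp (hℓ i (Set.mem_univ i))
  rw [zsmul_eq_mul, mul_one] at hk
  have hk0 : k ≠ 0 := by rintro rfl; exact hi (by simp [← hk])
  have h1 : (1 : ℝ) ≤ |ℓ i| := by
    rw [← hk]
    exact_mod_cast Int.one_le_abs hk0
  have h2 : (1 : ℝ) ≤ ‖ℓ‖ := le_trans h1 (by simpa [Real.norm_eq_abs] using norm_le_pi_norm ℓ i)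
  calc c = c * 1 := (mul_one c).symm
    _ ≤ c * ‖ℓ‖ := by nlinarith
    _ ≤ 𝔑.N ℓ := hlow ℓ

end Qdist

section MapLemmas

lemma matR_mul (A B : Matrix (Fin d) (Fin d) ℤ) : matR (A * B) = matR A * matR B := by
  ext i j
  simp [matR, Matrix.mul_apply]

lemma matR_one : matR (1 : Matrix (Fin d) (Fin d) ℤ) = 1 := by
  ext i j
  simp [matR, Matrix.one_apply, apply_ite]

lemma pow_mul_pow_eq_one (hBA : B * A = 1) (n : ℕ) :
    (matR B) ^ n * (matR A) ^ n = 1 := by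
  induction n with
  | zero => simp
  | succ n ih =>
    have hBA' : matR B * matR A = 1 := by rw [← matR_mul, hBA, matR_one]
    calc (matR B) ^ (n+1) * (matR A) ^ (n+1)
        = (matR B) ^ n * ((matR B * matR A) * (matR A) ^ n) := by
          rw [pow_succ, pow_succ']; simp only [mul_assoc]
      _ = 1 := by rw [hBA', one_mul, ih]

lemma pow_mulVec_cancel (hBA : B * A = 1) (n : ℕ) (v : Fin d → ℝ) :
    ((matR B) ^ n).mulVec (((matR A) ^ n).mulVec v) = v := by
  rw [Matrix.mulVec_mulVec, pow_mul_pow_eq_one hBA, Matrix.one_mulVec]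

lemma tmap_mk (A : Matrix (Fin d) (Fin d) ℤ) (v : Fin d → ℝ) :
    tmap A (Tproj d v) = Tproj d ((matR A).mulVec v) :=
  rfl

lemma tmap_iterate (A : Matrix (Fin d) (Fin d) ℤ) (n : ℕ) (v : Fin d → ℝ) :
    (⇑(tmap A))^[n] (Tproj d v) = Tproj d (((matR A) ^ n).mulVec v) := by
  induction n with
  | zero => simp [Matrix.one_mulVec]
  | succ n ih =>
    rw [Function.iterate_succ_apply', ih, tmap_mk, Matrix.mulVec_mulVec, ← pow_succ']

lemma pow_mulVec_mem (M : Matrix (Fin d) (Fin d) ℝ) (E : Submodule ℝ (Fin d → ℝ))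
    (hInv : ∀ v ∈ E, M.mulVec v ∈ E) (n : ℕ) {v : Fin d → ℝ} (hv : v ∈ E) :
    (M ^ n).mulVec v ∈ E := by
  induction n with
  | zero => simpa [Matrix.one_mulVec] using hv
  | succ n ih =>
    rw [pow_succ', ← Matrix.mulVec_mulVec]
    exact hInv _ ih

lemma pow_mulVec_contr (𝔑 : AdaptedNorm d A B) (M : Matrix (Fin d) (Fin d) ℝ)
    (E : Submodule ℝ (Fin d → ℝ)) (hInv : ∀ v ∈ E, M.mulVec v ∈ E)
    (hContr : ∀ v ∈ E, 𝔑.N (M.mulVec v) ≤ 𝔑.lam * 𝔑.N v) (n : ℕ) {v : Fin d → ℝ}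
    (hv : v ∈ E) : 𝔑.N ((M ^ n).mulVec v) ≤ 𝔑.lam ^ n * 𝔑.N v := by
  induction n with
  | zero => simp [Matrix.one_mulVec]
  | succ n ih =>
    rw [pow_succ', ← Matrix.mulVec_mulVec]
    calc 𝔑.N (M.mulVec ((M ^ n).mulVec v)) ≤ 𝔑.lam * 𝔑.N ((M ^ n).mulVec v) :=
          hContr _ (pow_mulVec_mem M E hInv n hv)
      _ ≤ 𝔑.lam * (𝔑.lam ^ n * 𝔑.N v) := by
          have := 𝔑.lam_nonneg; nlinarith [𝔑.nonneg ((M ^ n).mulVec v)]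
      _ = 𝔑.lam ^ (n + 1) * 𝔑.N v := by ring

end MapLemmas

section Topology

lemma continuous_tproj : Continuous (Tproj d) := continuous_quot_mk

lemma isQuotientMap_tproj : Topology.IsQuotientMap (⇑(Tproj d)) :=
  QuotientAddGroup.isQuotientMap_mk (intLattice d)

lemma continuous_tmap (A : Matrix (Fin d) (Fin d) ℤ) : Continuous (⇑(tmap A)) := by
  rw [(isQuotientMap_tproj).continuous_iff]
  have h : (⇑(tmap A)) ∘ (⇑(Tproj d)) = (⇑(Tproj d)) ∘ (matR A).mulVec :=
    funext fun v => tmap_mk A v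
  rw [h]
  exact continuous_tproj.comp (matR A).mulVecLin.continuous_of_finiteDimensional

lemma continuous_qdist_zero (𝔑 : AdaptedNorm d A B) :
    Continuous (fun w : Torus d => qdist 𝔑.N w 0) := by
  obtain ⟨C, hC, hCle⟩ := N_upper 𝔑
  rw [(isQuotientMap_tproj).continuous_iff]
  have key : ∀ a b : Fin d → ℝ,
      qdist 𝔑.N (Tproj d a) 0 ≤ qdist 𝔑.N (Tproj d b) 0 + 𝔑.N (a - b) := by
    intro a b
    have hb : ∀ u : Fin d → ℝ, Tproj d u = Tproj d b - 0 →
        qdist 𝔑.N (Tproj d a) 0 ≤ 𝔑.N u + 𝔑.N (a - b) := by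
      intro u hu
      rw [sub_zero] at hu
      have hlift : Tproj d (a - b + u) = Tproj d a - 0 := by
        rw [map_add, map_sub, hu, sub_zero]
        abel
      calc qdist 𝔑.N (Tproj d a) 0 ≤ 𝔑.N (a - b + u) := qdist_le 𝔑 hlift
        _ ≤ 𝔑.N (a - b) + 𝔑.N u := 𝔑.triangle _ _
        _ = 𝔑.N u + 𝔑.N (a - b) := add_comm _ _
    have hne : (𝔑.N '' {v | Tproj d v = Tproj d b - 0}).Nonempty := by
      refine ⟨𝔑.N b, b, ?_, rfl⟩
      simp only [Set.mem_setOf_eq, sub_zero]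
    have := le_csInf hne (by rintro r ⟨u, hu, rfl⟩; exact (by linarith [hb u hu] : qdist 𝔑.N (Tproj d a) 0 - 𝔑.N (a - b) ≤ 𝔑.N u))
    have h2 : qdist 𝔑.N (Tproj d b) 0 = sInf (𝔑.N '' {v | Tproj d v = Tproj d b - 0}) := rfl
    rw [h2]
    linarith
  refine (LipschitzWith.of_dist_le_mul (K := ⟨C, hC.le⟩) fun a b => ?_).continuous
  have h1 := key a b
  have h2 := key b a
  have hn : 𝔑.N (b - a) = 𝔑.N (a - b) := by rw [← N_neg 𝔑 (a - b), neg_sub]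
  rw [hn] at h2
  have habs : |qdist 𝔑.N (Tproj d a) 0 - qdist 𝔑.N (Tproj d b) 0| ≤ 𝔑.N (a - b) := by
    rw [abs_sub_le_iff]; constructor <;> linarith
  calc dist ((fun w : Torus d => qdist 𝔑.N w 0) ∘ ⇑(Tproj d) <| a)
        ((fun w : Torus d => qdist 𝔑.N w 0) ∘ ⇑(Tproj d) <| b)
      = |qdist 𝔑.N (Tproj d a) 0 - qdist 𝔑.N (Tproj d b) 0| := Real.dist_eq _ _
    _ ≤ 𝔑.N (a - b) := habs
    _ ≤ C * ‖a - b‖ := hCle _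
    _ = C * dist a b := by rw [dist_eq_norm]

lemma continuous_qdist (𝔑 : AdaptedNorm d A B) :
    Continuous (fun p : Torus d × Torus d => qdist 𝔑.N p.1 p.2) := by
  have h : (fun p : Torus d × Torus d => qdist 𝔑.N p.1 p.2) =
      (fun w : Torus d => qdist 𝔑.N w 0) ∘ (fun p : Torus d × Torus d => p.1 - p.2) :=
    funext fun p => qdist_sub_zero 𝔑 p.1 p.2
  rw [h]
  exact (continuous_qdist_zero 𝔑).comp (continuous_fst.sub continuous_snd)

lemma compactSpace_torus : CompactSpace (Torus d) := by
  refine ⟨?_⟩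
  have h : (Set.univ : Set (Torus d)) = (Tproj d) '' (Set.Icc 0 1) := by
    refine Set.eq_of_subset_of_subset (fun w _ => ?_) (Set.subset_univ _)
    obtain ⟨u, rfl⟩ := tproj_surjective w
    refine ⟨fun i => Int.fract (u i), ?_, ?_⟩
    · constructor
      · intro i; exact Int.fract_nonneg _
      · intro i; exact (Int.fract_lt_one _).le
    · have hmem : u - (fun i => Int.fract (u i)) ∈ intLattice d := by
        rw [intLattice, AddSubgroup.mem_pi]
        intro i _
        rw [AddSubgroup.mem_zmultiples_iff]
        exact ⟨⌊u i⌋, by simp [Int.self_sub_fract]⟩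
      have : Tproj d (u - fun i => Int.fract (u i)) = 0 :=
        (QuotientAddGroup.eq_zero_iff _).mpr hmem
      rw [map_sub, sub_eq_zero] at this
      exact this.symm
  rw [h]
  exact (isCompact_Icc).image continuous_tproj

lemma continuous_of_graph_closed {X Y : Type*} [TopologicalSpace X] [TopologicalSpace Y]
    [CompactSpace Y] {f : X → Y} (h : IsClosed {p : X × Y | f p.1 = p.2}) : Continuous f := by
  rw [continuous_iff_isClosed]
  intro C hC
  have key : f ⁻¹' C = Prod.fst '' ({p : X × Y | f p.1 = p.2} ∩ (Set.univ ×ˢ C)) := by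
    ext x
    constructor
    · intro hx
      exact ⟨(x, f x), ⟨rfl, Set.mem_univ _, hx⟩, rfl⟩
    · rintro ⟨⟨a, b⟩, ⟨hab, -, hb⟩, rfl⟩
      simp only [Set.mem_setOf_eq] at hab
      simpa [hab] using hb
  rw [key]
  exact isClosedMap_fst_of_compactSpace _ (h.inter (isClosed_univ.prod hC))

end Topology

section Main
variable (𝔑 : AdaptedNorm d A B)

lemma cA_nonneg (hd : 1 ≤ d) : 0 ≤ 𝔑.cA := by
  haveI : Nonempty (Fin d) := ⟨⟨0, hd⟩⟩
  set e : Fin d → ℝ := Pi.single (Classical.arbitrary (Fin d)) 1 with he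
  have hne : e ≠ 0 := by
    intro h
    have := congrFun h (Classical.arbitrary (Fin d))
    simp [he] at this
  have hNe : 0 < 𝔑.N e :=
    lt_of_le_of_ne (𝔑.nonneg e) fun h => hne ((𝔑.eq_zero_iff e).mp h.symm)
  nlinarith [𝔑.boundA e, 𝔑.nonneg ((matR A).mulVec e)]

lemma cB_nonneg (hd : 1 ≤ d) : 0 ≤ 𝔑.cB := by
  haveI : Nonempty (Fin d) := ⟨⟨0, hd⟩⟩
  set e : Fin d → ℝ := Pi.single (Classical.arbitrary (Fin d)) 1 with he
  have hne : e ≠ 0 := by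
    intro h
    have := congrFun h (Classical.arbitrary (Fin d))
    simp [he] at this
  have hNe : 0 < 𝔑.N e :=
    lt_of_le_of_ne (𝔑.nonneg e) fun h => hne ((𝔑.eq_zero_iff e).mp h.symm)
  nlinarith [𝔑.boundB e, 𝔑.nonneg ((matR B).mulVec e)]

lemma expansive (hd : 1 ≤ d) (hAB : A * B = 1) (hBA : B * A = 1)
    {ρ δ : ℝ} (hρmin : ∀ ℓ ∈ intLattice d, ℓ ≠ 0 → ρ ≤ 𝔑.N ℓ)
    (hδ : 0 < δ) (hδA : 𝔑.cA * δ + δ < ρ) (hδB : 𝔑.cB * δ + δ < ρ)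
    (w : Torus d)
    (hf : ∀ n : ℕ, qdist 𝔑.N ((⇑(tmap A))^[n] w) 0 ≤ δ)
    (hb : ∀ n : ℕ, qdist 𝔑.N ((⇑(tmap B))^[n] w) 0 ≤ δ) : w = 0 := by
  obtain ⟨v₀, hv₀, hv₀N, -⟩ := exists_min_lift 𝔑 hd w 0
  rw [sub_zero] at hv₀
  have hcA := cA_nonneg 𝔑 hd
  have hcB := cB_nonneg 𝔑 hd
  -- generic one-step claim
  have step : ∀ (M : Matrix (Fin d) (Fin d) ℤ) (c : ℝ), 0 ≤ c →
      (∀ u, 𝔑.N ((matR M).mulVec u) ≤ c * 𝔑.N u) → c * δ + δ < ρ →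
      ∀ u : Fin d → ℝ, 𝔑.N u ≤ δ → qdist 𝔑.N (Tproj d ((matR M).mulVec u)) 0 ≤ δ →
      𝔑.N ((matR M).mulVec u) ≤ δ := by
    intro M c hc hbound hcδ u hu hq
    obtain ⟨v', hv', hv'N, -⟩ := exists_min_lift 𝔑 hd (Tproj d ((matR M).mulVec u)) 0
    rw [sub_zero] at hv'
    have hv'δ : 𝔑.N v' ≤ δ := hv'N ▸ hq
    have hℓ : (matR M).mulVec u - v' ∈ intLattice d := by
      have : Tproj d ((matR M).mulVec u - v') = 0 := by rw [map_sub, hv', sub_self]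
      exact (QuotientAddGroup.eq_zero_iff _).mp this
    have hNMu : 𝔑.N ((matR M).mulVec u) ≤ c * δ :=
      le_trans (hbound u) (mul_le_mul_of_nonneg_left hu hc)
    have hNℓ : 𝔑.N ((matR M).mulVec u - v') < ρ := by
      calc 𝔑.N ((matR M).mulVec u - v') ≤ 𝔑.N ((matR M).mulVec u) + 𝔑.N (-v') := by
            have := 𝔑.triangle ((matR M).mulVec u) (-v')
            simpa [sub_eq_add_neg] using this
        _ = 𝔑.N ((matR M).mulVec u) + 𝔑.N v' := by rw [N_neg]
        _ ≤ c * δ + δ := add_le_add hNMu hv'δ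
        _ < ρ := hcδ
    have hzero : (matR M).mulVec u - v' = 0 := by
      by_contra hne
      exact absurd (hρmin _ hℓ hne) (not_le.mpr hNℓ)
    rw [sub_eq_zero] at hzero
    rw [hzero]
    exact hv'δ
  have hAiter : ∀ n : ℕ, 𝔑.N (((matR A) ^ n).mulVec v₀) ≤ δ := by
    intro n
    induction n with
    | zero =>
      rw [pow_zero, Matrix.one_mulVec, hv₀N]
      simpa using hf 0
    | succ n ih =>
      have hq : qdist 𝔑.N (Tproj d ((matR A).mulVec (((matR A) ^ n).mulVec v₀))) 0 ≤ δ := by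
        have h := hf (n + 1)
        rw [← hv₀, tmap_iterate] at h
        rwa [pow_succ', ← Matrix.mulVec_mulVec] at h
      have hres := step A 𝔑.cA hcA 𝔑.boundA hδA _ ih hq
      rwa [Matrix.mulVec_mulVec, ← pow_succ'] at hres
  have hBiter : ∀ n : ℕ, 𝔑.N (((matR B) ^ n).mulVec v₀) ≤ δ := by
    intro n
    induction n with
    | zero =>
      rw [pow_zero, Matrix.one_mulVec, hv₀N]
      simpa using hb 0
    | succ n ih =>
      have hq : qdist 𝔑.N (Tproj d ((matR B).mulVec (((matR B) ^ n).mulVec v₀))) 0 ≤ δ := by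
        have h := hb (n + 1)
        rw [← hv₀, tmap_iterate] at h
        rwa [pow_succ', ← Matrix.mulVec_mulVec] at h
      have hres := step B 𝔑.cB hcB 𝔑.boundB hδB _ ih hq
      rwa [Matrix.mulVec_mulVec, ← pow_succ'] at hres
  -- split v₀
  obtain ⟨vs, hvs, vu, hvu, hsum⟩ := Submodule.mem_sup.mp
    (by rw [𝔑.compl.sup_eq_top]; trivial : v₀ ∈ 𝔑.Es ⊔ 𝔑.Eu)
  have hmaxA : ∀ n : ℕ, 𝔑.N (((matR A) ^ n).mulVec vu) ≤ δ := by
    intro n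
    have hsplit : ((matR A) ^ n).mulVec v₀ =
        ((matR A) ^ n).mulVec vs + ((matR A) ^ n).mulVec vu := by
      rw [← Matrix.mulVec_add, hsum]
    have hadapt := 𝔑.adapted _ (pow_mulVec_mem _ _ 𝔑.EsInvA n hvs) _ (pow_mulVec_mem _ _ 𝔑.EuInvA n hvu)
    have := hAiter n
    rw [hsplit, hadapt] at this
    exact le_trans (le_max_right _ _) this
  have hmaxB : ∀ n : ℕ, 𝔑.N (((matR B) ^ n).mulVec vs) ≤ δ := by
    intro n
    have hsplit : ((matR B) ^ n).mulVec v₀ =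
        ((matR B) ^ n).mulVec vs + ((matR B) ^ n).mulVec vu := by
      rw [← Matrix.mulVec_add, hsum]
    have hadapt := 𝔑.adapted _ (pow_mulVec_mem _ _ 𝔑.EsInvB n hvs) _ (pow_mulVec_mem _ _ 𝔑.EuInvB n hvu)
    have := hBiter n
    rw [hsplit, hadapt] at this
    exact le_trans (le_max_left _ _) this
  have hvu0 : vu = 0 := by
    by_contra hne
    have hNvu : 0 < 𝔑.N vu :=
      lt_of_le_of_ne (𝔑.nonneg vu) fun h => hne ((𝔑.eq_zero_iff vu).mp h.symm)
    obtain ⟨n, hn⟩ := exists_pow_lt_of_lt_one (div_pos hNvu hδ) 𝔑.lam_lt_one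
    have h1 : 𝔑.N vu ≤ 𝔑.lam ^ n * 𝔑.N (((matR A) ^ n).mulVec vu) := by
      have := pow_mulVec_contr 𝔑 (matR B) 𝔑.Eu 𝔑.EuInvB 𝔑.contract_u n
        (pow_mulVec_mem _ _ 𝔑.EuInvA n hvu)
      rwa [pow_mulVec_cancel hBA n vu] at this
    have h2 : 𝔑.lam ^ n * 𝔑.N (((matR A) ^ n).mulVec vu) ≤ 𝔑.lam ^ n * δ :=
      mul_le_mul_of_nonneg_left (hmaxA n) (pow_nonneg 𝔑.lam_nonneg n)
    rw [lt_div_iff₀ hδ] at hn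
    nlinarith [pow_nonneg 𝔑.lam_nonneg n]
  have hvs0 : vs = 0 := by
    by_contra hne
    have hNvs : 0 < 𝔑.N vs :=
      lt_of_le_of_ne (𝔑.nonneg vs) fun h => hne ((𝔑.eq_zero_iff vs).mp h.symm)
    obtain ⟨n, hn⟩ := exists_pow_lt_of_lt_one (div_pos hNvs hδ) 𝔑.lam_lt_one
    have h1 : 𝔑.N vs ≤ 𝔑.lam ^ n * 𝔑.N (((matR B) ^ n).mulVec vs) := by
      have := pow_mulVec_contr 𝔑 (matR A) 𝔑.Es 𝔑.EsInvA 𝔑.contract_s n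
        (pow_mulVec_mem _ _ 𝔑.EsInvB n hvs)
      rwa [pow_mulVec_cancel (A := B) (B := A) hAB n vs] at this
    have h2 : 𝔑.lam ^ n * 𝔑.N (((matR B) ^ n).mulVec vs) ≤ 𝔑.lam ^ n * δ :=
      mul_le_mul_of_nonneg_left (hmaxB n) (pow_nonneg 𝔑.lam_nonneg n)
    rw [lt_div_iff₀ hδ] at hn
    nlinarith [pow_nonneg 𝔑.lam_nonneg n]
  have hv₀0 : v₀ = 0 := by rw [← hsum, hvs0, hvu0, add_zero]
  rw [← hv₀, hv₀0, map_zero]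

lemma exists_bracket (hd : 1 ≤ d) {ε : ℝ} (hε : 0 < ε) {x y : Torus d}
    (hxy : qdist 𝔑.N x y ≤ ε) :
    ∃ z, z ∈ Wstable A 𝔑.N ε x ∩ Wstable B 𝔑.N ε y := by
  obtain ⟨v, hv, hvN, -⟩ := exists_min_lift 𝔑 hd x y
  obtain ⟨vs, hvs, vu, hvu, hsum⟩ := Submodule.mem_sup.mp
    (by rw [𝔑.compl.sup_eq_top]; trivial : v ∈ 𝔑.Es ⊔ 𝔑.Eu)
  have hNv : 𝔑.N v = max (𝔑.N vs) (𝔑.N vu) := by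
    rw [← hsum]; exact 𝔑.adapted vs hvs vu hvu
  have hNvs : 𝔑.N vs ≤ ε := by
    have : 𝔑.N vs ≤ 𝔑.N v := hNv ▸ le_max_left _ _
    linarith [hvN ▸ this, hxy]
  have hNvu : 𝔑.N vu ≤ ε := by
    have : 𝔑.N vu ≤ 𝔑.N v := hNv ▸ le_max_right _ _
    linarith [hvN ▸ this, hxy]
  refine ⟨x - Tproj d vs, fun n => ?_, fun n => ?_⟩
  · -- stable part
    have hdiff : Tproj d (((matR A) ^ n).mulVec vs) =
        (⇑(tmap A))^[n] x - (⇑(tmap A))^[n] (x - Tproj d vs) := by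
      rw [← iterate_map_sub (tmap A) n, sub_sub_cancel, tmap_iterate]
    refine le_trans (qdist_le 𝔑 hdiff) ?_
    calc 𝔑.N (((matR A) ^ n).mulVec vs) ≤ 𝔑.lam ^ n * 𝔑.N vs :=
          pow_mulVec_contr 𝔑 (matR A) 𝔑.Es 𝔑.EsInvA 𝔑.contract_s n hvs
      _ ≤ 1 * 𝔑.N vs := mul_le_mul_of_nonneg_right
          (pow_le_one₀ 𝔑.lam_nonneg 𝔑.lam_lt_one.le) (𝔑.nonneg vs)
      _ = 𝔑.N vs := one_mul _
      _ ≤ ε := hNvs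
  · -- unstable part
    have hyz : y - (x - Tproj d vs) = Tproj d (-vu) := by
      have h1 : y - (x - Tproj d vs) = Tproj d vs - (x - y) := by abel
      rw [h1, ← hv, ← map_sub]
      congr 1
      rw [← hsum]
      abel
    have hdiff : Tproj d (((matR B) ^ n).mulVec (-vu)) =
        (⇑(tmap B))^[n] y - (⇑(tmap B))^[n] (x - Tproj d vs) := by
      rw [← iterate_map_sub (tmap B) n, hyz, tmap_iterate]
    refine le_trans (qdist_le 𝔑 hdiff) ?_
    calc 𝔑.N (((matR B) ^ n).mulVec (-vu)) ≤ 𝔑.lam ^ n * 𝔑.N (-vu) :=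
          pow_mulVec_contr 𝔑 (matR B) 𝔑.Eu 𝔑.EuInvB 𝔑.contract_u n (neg_mem hvu)
      _ = 𝔑.lam ^ n * 𝔑.N vu := by rw [N_neg]
      _ ≤ 1 * 𝔑.N vu := mul_le_mul_of_nonneg_right
          (pow_le_one₀ 𝔑.lam_nonneg 𝔑.lam_lt_one.le) (𝔑.nonneg vu)
      _ = 𝔑.N vu := one_mul _
      _ ≤ ε := hNvu

lemma bracket_uniq (hd : 1 ≤ d) (hAB : A * B = 1) (hBA : B * A = 1)
    {ρ ε : ℝ} (hρmin : ∀ ℓ ∈ intLattice d, ℓ ≠ 0 → ρ ≤ 𝔑.N ℓ)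
    (hε : 0 < ε) (hδA : 𝔑.cA * (2 * ε) + 2 * ε < ρ) (hδB : 𝔑.cB * (2 * ε) + 2 * ε < ρ)
    {x y z z' : Torus d}
    (hz : z ∈ Wstable A 𝔑.N ε x ∩ Wstable B 𝔑.N ε y)
    (hz' : z' ∈ Wstable A 𝔑.N ε x ∩ Wstable B 𝔑.N ε y) : z = z' := by
  have key : z - z' = 0 := by
    apply expansive 𝔑 hd hAB hBA hρmin (by linarith) hδA hδB
    · intro n
      have h1 := hz.1 n
      have h2 := hz'.1 n
      rw [iterate_map_sub (tmap A) n, ← qdist_sub_zero]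
      calc qdist 𝔑.N ((⇑(tmap A))^[n] z) ((⇑(tmap A))^[n] z')
          ≤ qdist 𝔑.N ((⇑(tmap A))^[n] z) ((⇑(tmap A))^[n] x) +
            qdist 𝔑.N ((⇑(tmap A))^[n] x) ((⇑(tmap A))^[n] z') := qdist_triangle 𝔑 hd _ _ _
        _ ≤ ε + ε := add_le_add (le_of_eq_of_le (qdist_symm 𝔑 _ _) h1) h2
        _ = 2 * ε := by ring
    · intro n
      have h1 := hz.2 n
      have h2 := hz'.2 n
      rw [iterate_map_sub (tmap B) n, ← qdist_sub_zero]
      calc qdist 𝔑.N ((⇑(tmap B))^[n] z) ((⇑(tmap B))^[n] z')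
          ≤ qdist 𝔑.N ((⇑(tmap B))^[n] z) ((⇑(tmap B))^[n] y) +
            qdist 𝔑.N ((⇑(tmap B))^[n] y) ((⇑(tmap B))^[n] z') := qdist_triangle 𝔑 hd _ _ _
        _ ≤ ε + ε := add_le_add (le_of_eq_of_le (qdist_symm 𝔑 _ _) h1) h2
        _ = 2 * ε := by ring
  rwa [sub_eq_zero] at key

end Main
end StatementAux


set_option maxHeartbeats 2000000

/-- **Lemma 6.1** (local product structure): for all sufficiently small `ε > 0`, if
`d(x,y) ≤ ε` then `W^s_ε(x) ∩ W^u_ε(y)` consists of a single point `[x,y]`, and the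
map `(x,y) ↦ [x,y]` is continuous. -/
theorem statement8
    (d : ℕ) (hd : 1 ≤ d)
    (A B : Matrix (Fin d) (Fin d) ℤ) (hAB : A * B = 1) (hBA : B * A = 1)
    (hhyp : IsHyperbolic A)
    (𝔑 : AdaptedNorm d A B) :
    ∃ ε₀ : ℝ, 0 < ε₀ ∧ ∀ ε : ℝ, 0 < ε → ε ≤ ε₀ →
      ∃ bracket : {q : Torus d × Torus d // qdist 𝔑.N q.1 q.2 ≤ ε} → Torus d,
        (∀ q, bracket q ∈ Wstable A 𝔑.N ε q.1.1 ∩ Wstable B 𝔑.N ε q.1.2) ∧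
        (∀ q, ∀ z, z ∈ Wstable A 𝔑.N ε q.1.1 ∩ Wstable B 𝔑.N ε q.1.2 → z = bracket q) ∧
        Continuous bracket := by
  classical
  obtain ⟨ρ, hρ, hρmin⟩ := StatementAux.lattice_min 𝔑 hd
  set K : ℝ := max 𝔑.cA 𝔑.cB with hK
  have hK0 : 0 ≤ K := le_trans (StatementAux.cA_nonneg 𝔑 hd) (le_max_left _ _)
  have hK1 : (0:ℝ) < K + 1 := by linarith
  refine ⟨ρ / (4 * (K + 1)), by positivity, fun ε hε hεle => ?_⟩
  have hmain : (K + 1) * (2 * (ρ / (4 * (K + 1)))) = ρ / 2 := by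
    field_simp
    ring
  have hstep : (K + 1) * (2 * ε) ≤ ρ / 2 := by
    calc (K + 1) * (2 * ε) ≤ (K + 1) * (2 * (ρ / (4 * (K + 1)))) := by nlinarith
      _ = ρ / 2 := hmain
  have hδA : 𝔑.cA * (2 * ε) + 2 * ε < ρ := by
    have hcA : 𝔑.cA ≤ K := le_max_left _ _
    nlinarith
  have hδB : 𝔑.cB * (2 * ε) + 2 * ε < ρ := by
    have hcB : 𝔑.cB ≤ K := le_max_right _ _
    nlinarith
  have hex : ∀ q : {q : Torus d × Torus d // qdist 𝔑.N q.1 q.2 ≤ ε},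
      ∃ z, z ∈ Wstable A 𝔑.N ε q.1.1 ∩ Wstable B 𝔑.N ε q.1.2 :=
    fun q => StatementAux.exists_bracket 𝔑 hd hε q.2
  choose bracket hbr using hex
  have huniq : ∀ q, ∀ z, z ∈ Wstable A 𝔑.N ε q.1.1 ∩ Wstable B 𝔑.N ε q.1.2 →
      z = bracket q :=
    fun q z hz => StatementAux.bracket_uniq 𝔑 hd hAB hBA hρmin hε hδA hδB hz (hbr q)
  refine ⟨bracket, hbr, huniq, ?_⟩
  haveI : CompactSpace (Torus d) := StatementAux.compactSpace_torus
  apply StatementAux.continuous_of_graph_closed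
  have hgraph : {p : {q : Torus d × Torus d // qdist 𝔑.N q.1 q.2 ≤ ε} × Torus d |
        bracket p.1 = p.2} =
      {p : {q : Torus d × Torus d // qdist 𝔑.N q.1 q.2 ≤ ε} × Torus d |
        ∀ n : ℕ, qdist 𝔑.N ((⇑(tmap A))^[n] p.1.1.1) ((⇑(tmap A))^[n] p.2) ≤ ε} ∩
      {p : {q : Torus d × Torus d // qdist 𝔑.N q.1 q.2 ≤ ε} × Torus d |
        ∀ n : ℕ, qdist 𝔑.N ((⇑(tmap B))^[n] p.1.1.2) ((⇑(tmap B))^[n] p.2) ≤ ε} := by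
    ext p
    constructor
    · intro hp
      simp only [Set.mem_setOf_eq] at hp
      have h := hbr p.1
      rw [hp] at h
      exact ⟨h.1, h.2⟩
    · rintro ⟨h1, h2⟩
      exact (huniq p.1 p.2 ⟨h1, h2⟩).symm
  rw [hgraph]
  apply IsClosed.inter
  · rw [Set.setOf_forall]
    refine isClosed_iInter fun n => ?_
    refine isClosed_le ?_ continuous_const
    exact (StatementAux.continuous_qdist 𝔑).comp
      ((((StatementAux.continuous_tmap A).iterate n).comp
        ((continuous_subtype_val.comp continuous_fst).fst)).prodMk
       (((StatementAux.continuous_tmap A).iterate n).comp continuous_snd))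
  · rw [Set.setOf_forall]
    refine isClosed_iInter fun n => ?_
    refine isClosed_le ?_ continuous_const
    exact (StatementAux.continuous_qdist 𝔑).comp
      ((((StatementAux.continuous_tmap B).iterate n).comp
        ((continuous_subtype_val.comp continuous_fst).snd)).prodMk
       (((StatementAux.continuous_tmap B).iterate n).comp continuous_snd))


end
end
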